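/- arXiv:1307.6843 — 12 statements merged into one kernel-verified Lean document; each statement's English description precedes it below -/
import Mathlib

section
/- Let p and t be probability distributions on a countable set such that p_i > 0 implies t_i > 0, and let r = sup_{i : p_i > 0} p_i / t_i. If r > 1, then the informational divergence satisfies D(p‖t) ≤ (1/2) · (r log r / (r − 1)) · ‖p − t‖₁ (if r = 1 then p = t and D(p‖t) = 0 = ‖p − t‖₁). -/
/-- Informational divergence `D(p‖t) = Σ_{i : p_i > 0} p_i log(p_i / t_i)` (natural log). -/
noncomputable def kl (p t : ℕ → ℝ) : ℝ :=
  ∑' i, if 0 < p i then p i * Real.log (p i / t i) else 0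

/-- Variational distance `‖p − t‖₁ = Σ_i |p_i − t_i|`. -/
noncomputable def vd (p t : ℕ → ℝ) : ℝ := ∑' i, |p i - t i|

/-- A probability distribution on the countable set ℕ. -/
def IsDistrib (p : ℕ → ℝ) : Prop := (∀ i, 0 ≤ p i) ∧ HasSum p 1

/-!
Write `C = r log r / (r - 1)`. Termwise, with `x = p_i / t_i ∈ (0, r]`, the summand
`p_i log (p_i / t_i) = t_i · x log x` is nonpositive when `x ≤ 1`, and for `1 ≤ x ≤ r` convexity of
`x ↦ x log x` puts it below the chord from `(1, 0)` to `(r, r log r)`, i.e. below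
`t_i · C (x - 1) = C (p_i - t_i)`. Hence `D(p‖t) ≤ C Σ (p_i - t_i)⁺`, and since `Σ (p_i - t_i) = 0`
the positive parts sum to half of `‖p - t‖₁`. Summability of the divergence series comes from the
lower bound `p_i - t_i ≤ p_i log (p_i / t_i)`.
-/

open Real

lemma Summable.of_le_of_le {ι : Type*} {f g h : ι → ℝ} (hgf : ∀ i, g i ≤ f i)
    (hfh : ∀ i, f i ≤ h i) (hg : Summable g) (hh : Summable h) : Summable f := by
  have hfg : Summable (f - g) :=
    .of_nonneg_of_le (fun i => sub_nonneg.2 (hgf i)) (fun i => sub_le_sub_right (hfh i) _)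
      (hh.sub hg)
  simpa using hfg.add hg

lemma mul_log_le_chord {r x : ℝ} (hr : 1 < r) (hx : 0 ≤ x) (hxr : x ≤ r) :
    x * log x ≤ r * log r / (r - 1) * (x - 1)⁺ := by
  rcases le_or_gt x 1 with hx1 | hx1
  · have hC : 0 ≤ r * log r / (r - 1) :=
      div_nonneg (mul_log_nonneg hr.le) (sub_nonneg.2 hr.le)
    exact (mul_log_nonpos hx hx1).trans (mul_nonneg hC (posPart_nonneg _))
  · have hslope := convexOn_mul_log.secant_mono (a := 1) (Set.mem_Ici.2 zero_le_one)
      (Set.mem_Ici.2 hx) (Set.mem_Ici.2 (by linarith)) hx1.ne' (by linarith) hxr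
    simp only [log_one, mul_zero, sub_zero] at hslope
    rw [posPart_eq_self.2 (by linarith), ← div_le_iff₀ (by linarith)]
    exact hslope

lemma mul_log_div_le_chord {r a b : ℝ} (hr : 1 < r) (ha : 0 ≤ a) (hb : 0 < b) (hab : a / b ≤ r) :
    a * log (a / b) ≤ r * log r / (r - 1) * (a - b)⁺ := by
  have hscale : b * (a / b - 1)⁺ = (a - b)⁺ := by
    rw [posPart_def, posPart_def, mul_max_of_nonneg _ _ hb.le, mul_sub, mul_div_cancel₀ _ hb.ne',
      mul_one, mul_zero]
  calc a * log (a / b) = b * (a / b * log (a / b)) := by field_simp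
    _ ≤ b * (r * log r / (r - 1) * (a / b - 1)⁺) :=
      mul_le_mul_of_nonneg_left (mul_log_le_chord hr (div_nonneg ha hb.le) hab) hb.le
    _ = r * log r / (r - 1) * (a - b)⁺ := by rw [← hscale]; ring

lemma sub_le_mul_log_div {a b : ℝ} (ha : 0 < a) (hb : 0 < b) : a - b ≤ a * log (a / b) := by
  have h := one_sub_inv_le_log_of_pos (div_pos ha hb)
  rw [inv_div] at h
  calc a - b = a * (1 - b / a) := by field_simp
    _ ≤ a * log (a / b) := mul_le_mul_of_nonneg_left h ha.le

lemma posPart_eq_half_add_abs (x : ℝ) : x⁺ = (x + |x|) / 2 := by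
  rw [add_abs_eq_two_nsmul_posPart, nsmul_eq_mul]; ring

lemma HasSum.posPart {ι : Type*} {f : ι → ℝ} {a : ℝ} (hf : HasSum f a) :
    HasSum (fun i => (f i)⁺) ((a + ∑' i, |f i|) / 2) := by
  simp only [posPart_eq_half_add_abs]
  exact (hf.add hf.summable.abs.hasSum).div_const 2

lemma kl_le_mul_tsum_posPart {p t : ℕ → ℝ} {r : ℝ} (ht : ∀ i, 0 ≤ t i) (hs : Summable fun i => p i - t i)
    (habs : ∀ i, 0 < p i → 0 < t i) (hr : ∀ i, 0 < p i → p i / t i ≤ r) (hr1 : 1 < r) :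
    kl p t ≤ r * log r / (r - 1) * ∑' i, (p i - t i)⁺ := by
  set C := r * log r / (r - 1)
  have hC : 0 ≤ C := div_nonneg (mul_log_nonneg hr1.le) (sub_nonneg.2 hr1.le)
  have hupper : ∀ i, (if 0 < p i then p i * log (p i / t i) else 0) ≤ C * (p i - t i)⁺ := by
    intro i
    split_ifs with hpi
    · exact mul_log_div_le_chord hr1 hpi.le (habs i hpi) (hr i hpi)
    · exact mul_nonneg hC (posPart_nonneg _)
  have hlower : ∀ i, p i - t i ≤ if 0 < p i then p i * log (p i / t i) else 0 := by
    intro i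
    split_ifs with hpi
    · exact sub_le_mul_log_div hpi (habs i hpi)
    · linarith [ht i]
  have hpos : Summable fun i => C * (p i - t i)⁺ := (hs.hasSum.posPart.summable).mul_left C
  rw [kl, ← tsum_mul_left]
  exact (Summable.of_le_of_le hlower hupper hs hpos).tsum_le_tsum hupper hpos

/-- If `p` and `t` are probability distributions with `p ≪ t`,
and `r = sup_{i : p_i > 0} p_i / t_i` satisfies `r > 1`, then
`D(p‖t) ≤ (1/2) · (r log r / (r − 1)) · ‖p − t‖₁`. -/
theorem stmt0 (p t : ℕ → ℝ) (hp : IsDistrib p) (ht : IsDistrib t)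
    (habs : ∀ i, 0 < p i → 0 < t i) (r : ℝ)
    (hr : IsLUB {x : ℝ | ∃ i, 0 < p i ∧ x = p i / t i} r) (hr1 : 1 < r) :
    kl p t ≤ (1 / 2) * (r * Real.log r / (r - 1)) * vd p t := by
  have hdiff : HasSum (fun i => p i - t i) 0 := by simpa using hp.2.sub ht.2
  have hratio : ∀ i, 0 < p i → p i / t i ≤ r := fun i hpi => hr.1 ⟨i, hpi, rfl⟩
  have hhalf : ∑' i, (p i - t i)⁺ = vd p t / 2 := by
    simpa [vd] using hdiff.posPart.tsum_eq
  calc kl p t ≤ r * log r / (r - 1) * ∑' i, (p i - t i)⁺ :=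
        kl_le_mul_tsum_posPart ht.1 hdiff.summable habs hratio hr1
    _ = (1 / 2) * (r * Real.log r / (r - 1)) * vd p t := by rw [hhalf]; ring
end

section
/- Let t be a target distribution with finite or countably infinite support and let M be a positive integer. If p is an M-type distribution such that ‖p − t‖₁ ≤ ‖q − t‖₁ for every M-type distribution q, then |p_i − t_i| < 1/M for every index i. -/
/-- A target distribution: a probability distribution on the positive integers
(indexed here by ℕ) with nonincreasing entries. -/
def IsTargetDist (t : ℕ → ℝ) : Prop :=
  (∀ i, 0 ≤ t i) ∧ (∀ i, t (i + 1) ≤ t i) ∧ HasSum t 1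

/-- An `M`-type distribution: every entry is `c_i / M` for a nonnegative integer
`c_i ≤ M`, and the entries sum to one. -/
def IsMType (M : ℕ) (p : ℕ → ℝ) : Prop :=
  HasSum p 1 ∧ ∃ c : ℕ → ℕ, (∀ i, c i ≤ M) ∧ ∀ i, p i = (c i : ℝ) / M

lemma move (M : ℕ) (hM : 0 < M) (p t : ℕ → ℝ) (hps : HasSum p 1)
    (hst : Summable t) (c : ℕ → ℕ)
    (hcM : ∀ k, c k ≤ M) (hpc : ∀ k, p k = (c k : ℝ) / M)
    (i j : ℕ) (hij : j ≠ i) (hci : 1 ≤ c i) (hcj : c j < M)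
    (hsum : |p i - 1/(M:ℝ) - t i| - |p i - t i|
        + (|p j + 1/(M:ℝ) - t j| - |p j - t j|) < 0) :
    ∃ q, IsMType M q ∧ vd q t < vd p t := by
  have hMpos : (0:ℝ) < M := by exact_mod_cast hM
  set q : ℕ → ℝ := fun k => if k = i then p i - 1/(M:ℝ)
    else if k = j then p j + 1/(M:ℝ) else p k with hq
  have hqi : q i = p i - 1/(M:ℝ) := by simp [hq]
  have hqj : q j = p j + 1/(M:ℝ) := by simp [hq, hij]
  have hqdef : q = fun k => p k +
      ((if k = i then -(1/(M:ℝ)) else 0) + (if k = j then 1/(M:ℝ) else 0)) := by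
    funext k
    simp only [hq]
    split_ifs <;> subst_vars <;> first | exact absurd rfl hij | ring
  have hq1 : HasSum q 1 := by
    rw [hqdef]
    have h1 : HasSum (fun k => (if k = i then -(1/(M:ℝ)) else 0)
        + (if k = j then 1/(M:ℝ) else 0)) 0 := by
      have := (hasSum_ite_eq i (-(1/(M:ℝ)))).add (hasSum_ite_eq j (1/(M:ℝ)))
      simpa using this
    simpa using hps.add h1
  have hmtype : IsMType M q := by
    refine ⟨hq1, fun k => if k = i then c i - 1 else if k = j then c j + 1 else c k,
      fun k => ?_, fun k => ?_⟩
    · dsimp only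
      split_ifs with h1 h2
      · have := hcM i; omega
      · omega
      · exact hcM k
    · dsimp only
      split_ifs with h1 h2
      · rw [h1, hqi, hpc i, Nat.cast_sub hci]
        push_cast
        field_simp
      · rw [h2, hqj, hpc j]
        push_cast
        field_simp
      · simp [hq, h1, h2, hpc k]
  have hsp : Summable (fun k => |p k - t k|) := (hps.summable.sub hst).abs
  have hDz : ∀ k ∉ ({i, j} : Finset ℕ), |q k - t k| - |p k - t k| = 0 := by
    intro k hk
    simp only [Finset.mem_insert, Finset.mem_singleton] at hk
    push_neg at hk
    simp [hq, hk.1, hk.2]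
  have hSD : Summable (fun k => |q k - t k| - |p k - t k|) :=
    summable_of_ne_finset_zero hDz
  have hvq : vd q t = vd p t + ∑' k, (|q k - t k| - |p k - t k|) := by
    unfold vd
    rw [← Summable.tsum_add hsp hSD]
    congr 1; funext k; ring
  have htD : ∑' k, (|q k - t k| - |p k - t k|)
      = (|q i - t i| - |p i - t i|) + (|q j - t j| - |p j - t j|) := by
    rw [tsum_eq_sum hDz, Finset.sum_pair (Ne.symm hij)]
  refine ⟨q, hmtype, ?_⟩
  rw [hvq, htD, hqi, hqj]
  linarith

lemma perturb (M : ℕ) (hM : 0 < M) (p t : ℕ → ℝ) (hp : IsMType M p)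
    (ht : HasSum t 1) (htnn : ∀ k, 0 ≤ t k)
    (i : ℕ) (hbad : 1 / (M:ℝ) ≤ |p i - t i|) :
    ∃ q, IsMType M q ∧ vd q t < vd p t := by
  obtain ⟨hps, c, hcM, hpc⟩ := hp
  have hMpos : (0:ℝ) < M := by exact_mod_cast hM
  have hε : (0:ℝ) < 1 / M := by positivity
  have htle : ∀ k, t k ≤ 1 := fun k => le_hasSum ht k (fun m _ => htnn m)
  have cast_lt : ∀ k, p k < 1 → c k < M := by
    intro k h
    rw [hpc k] at h
    have : (c k : ℝ) < M := by rwa [div_lt_one hMpos] at h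
    exact_mod_cast this
  have cast_pos : ∀ k, 0 < p k → 1 ≤ c k := by
    intro k h
    by_contra hc
    push_neg at hc
    have hc0 : c k = 0 := by omega
    rw [hpc k, hc0] at h
    simp at h
  rcases le_or_gt (t i) (p i) with hcase | hcase
  · have hi : 1/(M:ℝ) ≤ p i - t i := by
      rwa [abs_of_nonneg (by linarith)] at hbad
    obtain ⟨j, hj⟩ : ∃ j, p j < t j := by
      by_contra h
      push_neg at h
      exact absurd (hasSum_lt h (by linarith : t i < p i) ht hps) (lt_irrefl 1)
    have hij : j ≠ i := fun h => by rw [h] at hj; linarith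
    have hci : 1 ≤ c i := cast_pos i (by linarith [htnn i])
    have hcj : c j < M := cast_lt j (by linarith [htle j])
    apply move M hM p t hps ht.summable c hcM hpc i j hij hci hcj
    have h1 : |p i - 1/(M:ℝ) - t i| = p i - 1/M - t i := abs_of_nonneg (by linarith)
    have h2 : |p i - t i| = p i - t i := abs_of_nonneg (by linarith)
    have h3 : |p j - t j| = -(p j - t j) := abs_of_neg (by linarith)
    rcases le_or_gt (p j + 1/(M:ℝ) - t j) 0 with h4 | h4
    · rw [h1, h2, h3, abs_of_nonpos h4]; linarith
    · rw [h1, h2, h3, abs_of_pos h4]; linarith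
  · have hi : 1/(M:ℝ) ≤ t i - p i := by
      rw [abs_sub_comm] at hbad
      rwa [abs_of_nonneg (by linarith)] at hbad
    obtain ⟨j, hj⟩ : ∃ j, t j < p j := by
      by_contra h
      push_neg at h
      exact absurd (hasSum_lt h (by linarith : p i < t i) hps ht) (lt_irrefl 1)
    have hij : i ≠ j := fun h => by rw [h] at hi; linarith
    have hcj : 1 ≤ c j := cast_pos j (by linarith [htnn j])
    have hci : c i < M := cast_lt i (by linarith [htle i])
    apply move M hM p t hps ht.summable c hcM hpc j i hij hcj hci
    have h1 : |p i + 1/(M:ℝ) - t i| = -(p i + 1/M - t i) := abs_of_nonpos (by linarith)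
    have h2 : |p i - t i| = -(p i - t i) := abs_of_nonpos (by linarith)
    have h3 : |p j - t j| = p j - t j := abs_of_nonneg (by linarith)
    rcases le_or_gt 0 (p j - 1/(M:ℝ) - t j) with h4 | h4
    · rw [h1, h2, h3, abs_of_nonneg h4]; linarith
    · rw [h1, h2, h3, abs_of_neg h4]; linarith

/-- any variational-distance optimal `M`-type approximation `p` of a
target distribution `t` satisfies `|p_i − t_i| < 1/M` for every index `i`. -/
theorem stmt1 (t : ℕ → ℝ) (ht : IsTargetDist t) (M : ℕ) (hM : 0 < M)
    (p : ℕ → ℝ) (hp : IsMType M p)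
    (hopt : ∀ q, IsMType M q → vd p t ≤ vd q t) :
    ∀ i, |p i - t i| < 1 / M := by
  intro i
  by_contra h
  push_neg at h
  obtain ⟨q, hq, hlt⟩ := perturb M hM p t hp ht.2.2 ht.1 i h
  exact absurd (hopt q hq) (not_le.mpr hlt)
end

section
/- Let t be a target distribution with t_1 ≥ t_2 ≥ ⋯ and let M be a positive integer. Define the pre-approximation t̃_i = ⌊M t_i⌋/M, the errors e_i = t_i − t̃_i ≥ 0, and the integer L = M − Σ_i ⌊M t_i⌋ (so Σ_i e_i = L/M). Let 𝓛 be any set of L indices such that i ∈ 𝓛 and j ∉ 𝓛 imply e_i ≥ e_j, and define p by p_i = t̃_i + 1/M for i ∈ 𝓛 and p_i = t̃_i otherwise. Then p is an M-type probability distribution and ‖p − t‖₁ ≤ ‖q − t‖₁ for every M-type distribution q; i.e., p minimizes the variational distance to t among all M-type distributions. -/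
open Finset

section RoundingToIntegers

variable {ι : Type*}

lemma add_mul_le_abs_intCast_sub {x m : ℝ} (d : ℤ) (hx : 0 ≤ x) (hm : -1 ≤ m)
    (hmx : m ≤ 1 - 2 * x) : x + m * d ≤ |d - x| := by
  rcases le_or_gt d 0 with hd | hd
  · have hd' : (d : ℝ) ≤ 0 := by exact_mod_cast hd
    rw [abs_of_nonpos (by linarith)]
    nlinarith
  · have hd' : (1 : ℝ) ≤ d := by exact_mod_cast hd
    rw [abs_of_nonneg (by linarith)]
    nlinarith

lemma one_sub_add_mul_le_abs_intCast_sub {x m : ℝ} (d : ℤ) (hx : x ≤ 1)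
    (hmx : 1 - 2 * x ≤ m) (hm : m ≤ 1) : 1 - x + m * (d - 1) ≤ |d - x| := by
  rcases le_or_gt d 0 with hd | hd
  · have hd' : (d : ℝ) ≤ 0 := by exact_mod_cast hd
    rw [abs_of_nonpos (by linarith)]
    nlinarith
  · have hd' : (1 : ℝ) ≤ d := by exact_mod_cast hd
    rw [abs_of_nonneg (by linarith)]
    nlinarith

lemma exists_separating_slope {x : ι → ℝ} (hx0 : ∀ i, 0 ≤ x i) (hx1 : ∀ i, x i ≤ 1)
    {s : Finset ι} (hs : ∀ i ∈ s, ∀ j ∉ s, x j ≤ x i) :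
    ∃ m : ℝ, -1 ≤ m ∧ m ≤ 1 ∧ (∀ i ∈ s, 1 - 2 * x i ≤ m) ∧ ∀ j ∉ s, m ≤ 1 - 2 * x j := by
  rcases s.eq_empty_or_nonempty with rfl | hne
  · exact ⟨-1, le_rfl, by norm_num, by simp, fun j _ => by linarith [hx1 j]⟩
  · obtain ⟨i₀, hi₀, hmin⟩ := s.exists_min_image x hne
    exact ⟨1 - 2 * x i₀, by linarith [hx1 i₀], by linarith [hx0 i₀],
      fun i hi => by linarith [hmin i hi], fun j hj => by linarith [hs i₀ hi₀ j hj]⟩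

lemma hasSum_ite_mem [DecidableEq ι] (s : Finset ι) :
    HasSum (fun i => if i ∈ s then (1 : ℝ) else 0) #s := by
  simpa using hasSum_sum_of_ne_finset_zero (L := .unconditional ι)
    (f := fun i => if i ∈ s then (1 : ℝ) else 0) fun i hi => if_neg hi

theorem tsum_abs_ite_mem_sub_le [DecidableEq ι] {x : ι → ℝ} (hx0 : ∀ i, 0 ≤ x i)
    (hx1 : ∀ i, x i ≤ 1) (hx : Summable x) {s : Finset ι} (hs : ∀ i ∈ s, ∀ j ∉ s, x j ≤ x i)
    {d : ι → ℤ} (hd : HasSum (fun i => (d i : ℝ)) #s) :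
    ∑' i, |(if i ∈ s then 1 else 0) - x i| ≤ ∑' i, |d i - x i| := by
  obtain ⟨m, hm₁, hm₂, hms, hmsc⟩ := exists_separating_slope hx0 hx1 hs
  have hk := hasSum_ite_mem s
  have hbound : ∀ i, |(if i ∈ s then 1 else 0) - x i| + m * (d i - if i ∈ s then 1 else 0)
      ≤ |d i - x i| := by
    intro i
    by_cases hi : i ∈ s
    · simpa [hi, abs_of_nonneg (sub_nonneg.2 (hx1 i))] using
        one_sub_add_mul_le_abs_intCast_sub (d i) (hx1 i) (hms i hi) hm₂
    · simpa [hi, abs_of_nonneg (hx0 i)] using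
        add_mul_le_abs_intCast_sub (d i) (hx0 i) hm₁ (hmsc i hi)
  simpa using hasSum_le hbound ((hk.summable.sub hx).abs.hasSum.add ((hd.sub hk).mul_left m))
    (hd.summable.sub hx).abs.hasSum

end RoundingToIntegers

lemma isMType_of_hasSum {M : ℕ} (hM : 0 < M) {n : ℕ → ℕ} (hn : HasSum (fun i => (n i : ℝ)) M) :
    IsMType M (fun i => n i / M) := by
  have hM0 : (M : ℝ) ≠ 0 := Nat.cast_ne_zero.2 hM.ne'
  refine ⟨by simpa [hM0] using hn.div_const (M : ℝ), n, fun i => ?_, fun _ => rfl⟩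
  exact_mod_cast le_hasSum hn i fun j _ => Nat.cast_nonneg _

section FloorApproximation

variable {t : ℕ → ℝ} {M : ℕ}

lemma summable_intCast_floor_mul (ht0 : ∀ i, 0 ≤ t i) (ht : Summable t) {a : ℝ} (ha : 0 ≤ a) :
    Summable fun i => (⌊a * t i⌋ : ℝ) :=
  .of_nonneg_of_le (fun i => Int.cast_nonneg (Int.floor_nonneg.2 (mul_nonneg ha (ht0 i))))
    (fun _ => Int.floor_le _) (ht.mul_left a)

lemma vd_floor_add_div (hM : 0 < M) (d : ℕ → ℝ) :
    vd (fun i => (⌊(M : ℝ) * t i⌋ + d i) / M) t =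
      (∑' i, |d i - Int.fract ((M : ℝ) * t i)|) / M := by
  have hM0 : (0 : ℝ) < M := Nat.cast_pos.2 hM
  have hsub : ∀ i, (⌊(M : ℝ) * t i⌋ + d i) / M - t i = (d i - Int.fract ((M : ℝ) * t i)) / M :=
    fun i => by rw [← Int.self_sub_floor]; field_simp; ring
  simp only [vd, hsub, abs_div, abs_of_pos hM0, tsum_div_const]

lemma isMType_floor_add_ite (ht0 : ∀ i, 0 ≤ t i) (hM : 0 < M) (s : Finset ℕ)
    (hs : HasSum (fun i => (⌊(M : ℝ) * t i⌋ : ℝ)) (M - #s)) :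
    IsMType M fun i => ((⌊(M : ℝ) * t i⌋ : ℝ) + if i ∈ s then 1 else 0) / M := by
  have hfloor : ∀ i, (⌊(M : ℝ) * t i⌋₊ : ℝ) = ⌊(M : ℝ) * t i⌋ :=
    fun i => natCast_floor_eq_intCast_floor (mul_nonneg (Nat.cast_nonneg M) (ht0 i))
  convert isMType_of_hasSum hM (n := fun i => ⌊(M : ℝ) * t i⌋₊ + if i ∈ s then 1 else 0) ?_
    using 3
  · push_cast [hfloor]; rfl
  · convert hs.add (hasSum_ite_mem s) using 1
    · push_cast [hfloor]; rfl
    · ring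

end FloorApproximation

/-- rounding down to the pre-approximation `⌊M t_i⌋ / M` and adding a
unit mass `1/M` to a set `𝓛` of `L` indices having the largest errors yields an
`M`-type distribution minimizing the variational distance to `t` among all
`M`-type distributions. -/
theorem stmt2 (t : ℕ → ℝ) (ht : IsTargetDist t) (M : ℕ) (hM : 0 < M)
    (e : ℕ → ℝ) (he : ∀ i, e i = t i - ((⌊(M : ℝ) * t i⌋ : ℝ)) / M)
    (L : ℕ) (hL : (L : ℝ) = (M : ℝ) - ∑' i, ((⌊(M : ℝ) * t i⌋ : ℝ)))
    (𝓛 : Finset ℕ) (hcard : 𝓛.card = L)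
    (hmax : ∀ i ∈ 𝓛, ∀ j ∉ 𝓛, e j ≤ e i)
    (p : ℕ → ℝ)
    (hp : ∀ i, p i = if i ∈ 𝓛 then ((⌊(M : ℝ) * t i⌋ : ℝ)) / M + 1 / M
                     else ((⌊(M : ℝ) * t i⌋ : ℝ)) / M) :
    IsMType M p ∧ ∀ q, IsMType M q → vd p t ≤ vd q t := by
  obtain ⟨ht0, -, ht⟩ := ht
  have hM0 : (0 : ℝ) < M := Nat.cast_pos.2 hM
  have hfloor : HasSum (fun i => (⌊(M : ℝ) * t i⌋ : ℝ)) (M - #𝓛) := by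
    rw [hcard, hL, sub_sub_cancel]
    exact (summable_intCast_floor_mul ht0 ht.summable hM0.le).hasSum
  have hex : ∀ i, e i = Int.fract ((M : ℝ) * t i) / M := fun i => by
    rw [he, ← Int.self_sub_floor]; field_simp
  have hfract : ∀ i ∈ 𝓛, ∀ j ∉ 𝓛, Int.fract ((M : ℝ) * t j) ≤ Int.fract ((M : ℝ) * t i) :=
    fun i hi j hj => by simpa only [hex, div_le_div_iff_of_pos_right hM0] using hmax i hi j hj
  have hp' : p = fun i => ((⌊(M : ℝ) * t i⌋ : ℝ) + if i ∈ 𝓛 then 1 else 0) / M := by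
    funext i; rw [hp]; split_ifs <;> simp [add_div]
  refine ⟨hp' ▸ isMType_floor_add_ite ht0 hM 𝓛 hfloor, ?_⟩
  rintro q ⟨hq, c, -, hqc⟩
  have hc : HasSum (fun i => (c i : ℝ)) M := by
    simpa [hqc, mul_div_cancel₀ _ hM0.ne'] using hq.mul_left (M : ℝ)
  have hq' : q = fun i => (⌊(M : ℝ) * t i⌋ + ((c i - ⌊(M : ℝ) * t i⌋ : ℤ) : ℝ)) / M := by
    funext i; simp [hqc]
  have hx : Summable fun i => Int.fract ((M : ℝ) * t i) :=
    ((ht.mul_left (M : ℝ)).sub hfloor).summable.congr fun _ => Int.self_sub_floor _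
  rw [hp', hq', vd_floor_add_div hM, vd_floor_add_div hM]
  exact div_le_div_of_nonneg_right (tsum_abs_ite_mem_sub_le (fun _ => Int.fract_nonneg _)
    (fun _ => (Int.fract_lt_one _).le) hx hfract (by simpa using hc.sub hfloor)) hM0.le
end

section
/- Let t be a target distribution with finite or countably infinite support and let M be a positive integer. There exists an M-type distribution p minimizing ‖p − t‖₁ over all M-type distributions which additionally satisfies: for all indices i, j, if t_j < t_i and p_i = 0, then p_j = 0. -/
/-!
An `M`-type distribution has at most `M` nonzero entries, so its support is finite. If `q i = 0`
while `q j ≠ 0` for some `i < j`, swapping the entries `i` and `j` does not increase the distance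
to the nonincreasing `t`: by the triangle inequality `|q_j - t_i| ≤ |q_j - t_j| + (t_i - t_j)`.
Repeated swaps therefore move the support of any `M`-type distribution onto an initial segment
of `ℕ` without increasing the distance. There are only finitely many `M`-type distributions
supported on an initial segment, and a minimizer among them is a global minimizer; its zeros form
an upper set, which is the required property because `t_j < t_i` forces `i < j`.
-/

def IsZeroUpwardClosed (p : ℕ → ℝ) : Prop :=
  ∀ ⦃i j : ℕ⦄, i ≤ j → p i = 0 → p j = 0

theorem isZeroUpwardClosed_single_zero (a : ℝ) : IsZeroUpwardClosed (Pi.single 0 a) := by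
  intro i j hij hi
  rcases eq_or_ne j 0 with rfl | hj
  · simpa [Nat.le_zero.1 hij] using hi
  · simp [hj]

theorem vd_comp_swap_add {q t : ℕ → ℝ} (hq : Summable q) (ht : Summable t) (i j : ℕ) :
    vd (q ∘ Equiv.swap i j) t + (|q i - t i| + |q j - t j|) =
      vd q t + (|q j - t i| + |q i - t j|) := by
  rcases eq_or_ne i j with rfl | hij
  · simp
  have hf : Summable fun k => |q k - t k| := (hq.sub ht).abs
  have hg : Summable fun k => |(q ∘ Equiv.swap i j) k - t k| :=
    (((Equiv.swap i j).summable_iff.2 hq).sub ht).abs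
  have hdiff : ∑' k, (|(q ∘ Equiv.swap i j) k - t k| - |q k - t k|) =
      (|q j - t i| - |q i - t i|) + (|q i - t j| - |q j - t j|) := by
    rw [tsum_eq_sum (s := {i, j}), Finset.sum_pair hij]
    · simp
    · intro k hk
      simp only [Finset.mem_insert, Finset.mem_singleton, not_or] at hk
      simp [Equiv.swap_apply_of_ne_of_ne hk.1 hk.2]
  rw [hg.tsum_sub hf] at hdiff
  unfold vd
  linarith

theorem vd_comp_swap_le {q t : ℕ → ℝ} (hq : Summable q) (ht : Summable t) {i j : ℕ}
    (htj : 0 ≤ t j) (hji : t j ≤ t i) (hqi : q i = 0) :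
    vd (q ∘ Equiv.swap i j) t ≤ vd q t := by
  have hswap := vd_comp_swap_add hq ht i j
  have htriangle := abs_sub_le (q j) (t j) (t i)
  rw [abs_sub_comm (t j), abs_of_nonneg (sub_nonneg.2 hji)] at htriangle
  simp only [hqi, zero_sub, abs_neg, abs_of_nonneg htj] at hswap
  linarith [le_abs_self (t i)]

namespace IsMType

variable {M : ℕ} {q : ℕ → ℝ}

theorem nonneg (hq : IsMType M q) (k : ℕ) : 0 ≤ q k := by
  obtain ⟨-, c, -, hc⟩ := hq
  rw [hc]
  positivity

theorem comp_equiv (hq : IsMType M q) (σ : Equiv.Perm ℕ) : IsMType M (q ∘ σ) := by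
  obtain ⟨hsum, c, hcM, hc⟩ := hq
  exact ⟨σ.hasSum_iff.2 hsum, c ∘ σ, fun k => hcM _, fun k => hc _⟩

theorem single_zero (hM : 0 < M) : IsMType M (Pi.single 0 1) := by
  refine ⟨hasSum_pi_single 0 1, Pi.single 0 M, fun k => ?_, fun k => ?_⟩
  · rcases eq_or_ne k 0 with rfl | hk <;> simp [*]
  · rcases eq_or_ne k 0 with rfl | hk
    · simp [hM.ne']
    · simp [hk]

theorem card_le (hM : 0 < M) (hq : IsMType M q) {s : Finset ℕ} (hs : ∀ k ∈ s, q k ≠ 0) :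
    s.card ≤ M := by
  have hsum_le : ∑ k ∈ s, q k ≤ 1 :=
    hq.1.tsum_eq ▸ hq.1.summable.sum_le_tsum s fun k _ => hq.nonneg k
  obtain ⟨-, c, -, hc⟩ := hq
  have hc_pos : ∀ k ∈ s, 1 ≤ c k := fun k hk =>
    Nat.one_le_iff_ne_zero.2 fun h => hs k hk (by simp [hc, h])
  have hc_sum : ((∑ k ∈ s, c k : ℕ) : ℝ) ≤ M := by
    rw [← div_le_one (by positivity), Nat.cast_sum, Finset.sum_div]
    simpa only [hc] using hsum_le
  calc s.card ≤ ∑ k ∈ s, c k := by simpa using Finset.card_nsmul_le_sum s c 1 hc_pos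
    _ ≤ M := by exact_mod_cast hc_sum

theorem finite_support (hM : 0 < M) (hq : IsMType M q) : (Function.support q).Finite := by
  by_contra hinf
  obtain ⟨s, hs, hcard⟩ := Set.Infinite.exists_subset_card_eq hinf (M + 1)
  have := hq.card_le hM fun k hk => hs hk
  omega

theorem eq_zero_of_le (hM : 0 < M) (hq : IsMType M q) (hqz : IsZeroUpwardClosed q) {k : ℕ}
    (hk : M ≤ k) : q k = 0 := by
  by_contra hqk
  have := hq.card_le hM (s := Finset.range (M + 1)) fun i hi hqi =>
    hqk (hqz (by simp at hi; omega) hqi)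
  simp at this

theorem finite_setOf_eq_zero_of_le (M N : ℕ) :
    {p | IsMType M p ∧ ∀ k, N ≤ k → p k = 0}.Finite := by
  refine (Set.finite_range fun (c : Fin N → Fin (M + 1)) (k : ℕ) =>
    if h : k < N then ((c ⟨k, h⟩ : ℕ) : ℝ) / M else 0).subset ?_
  rintro p ⟨⟨-, c, hcM, hc⟩, hzero⟩
  refine ⟨fun k => ⟨c k, Nat.lt_succ_of_le (hcM k)⟩, funext fun k => ?_⟩
  dsimp only
  split_ifs with h
  · exact (hc k).symm
  · exact (hzero k (not_lt.mp h)).symm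

end IsMType

section Rearrangement

variable {M : ℕ} {t : ℕ → ℝ}

theorem exists_isZeroUpwardClosed_vd_le_of_eq_zero_of_le (ht0 : ∀ k, 0 ≤ t k)
    (hanti : Antitone t) (htS : Summable t) (N : ℕ) :
    ∀ q, IsMType M q → (∀ k, N ≤ k → q k = 0) →
      ∃ p, IsMType M p ∧ IsZeroUpwardClosed p ∧ vd p t ≤ vd q t := by
  induction N with
  | zero =>
    exact fun q hq hzero => ⟨q, hq, fun i j _ _ => hzero j (Nat.zero_le j), le_rfl⟩
  | succ N ih =>
    intro q hq hzero
    by_cases hqN : q N = 0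
    · refine ih q hq fun k hk => ?_
      rcases hk.eq_or_lt with rfl | hk
      exacts [hqN, hzero k hk]
    by_cases hgap : ∃ i < N, q i = 0
    · obtain ⟨i, hiN, hqi⟩ := hgap
      -- Swapping the zero at `i` with the entry at `N` shrinks the support bound to `N`.
      obtain ⟨p, hp, hpz, hle⟩ := ih (q ∘ Equiv.swap i N) (hq.comp_equiv _) fun k hk => by
        rcases hk.eq_or_lt with rfl | hk
        · simpa using hqi
        · simpa [Equiv.swap_apply_of_ne_of_ne (by omega : k ≠ i) hk.ne'] using hzero k hk
      exact ⟨p, hp, hpz, hle.trans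
        (vd_comp_swap_le hq.1.summable htS (ht0 N) (hanti hiN.le) hqi)⟩
    · push Not at hgap
      refine ⟨q, hq, fun i j hij hqi => hzero j ?_, le_rfl⟩
      have : N < i := by
        by_contra hiN
        rcases (not_lt.mp hiN).eq_or_lt with rfl | hiN
        exacts [hqN hqi, hgap i hiN hqi]
      omega

theorem exists_isZeroUpwardClosed_vd_le (hM : 0 < M) (ht0 : ∀ k, 0 ≤ t k)
    (hanti : Antitone t) (htS : Summable t) {q : ℕ → ℝ} (hq : IsMType M q) :
    ∃ p, IsMType M p ∧ IsZeroUpwardClosed p ∧ vd p t ≤ vd q t := by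
  obtain ⟨N, hN⟩ := (hq.finite_support hM).bddAbove
  refine exists_isZeroUpwardClosed_vd_le_of_eq_zero_of_le ht0 hanti htS (N + 1) q hq
    fun k hk => Function.notMem_support.1 fun hmem => ?_
  have := hN hmem
  omega

end Rearrangement

/-- there exists a variational-distance optimal `M`-type approximation
`p` of `t` such that `t_j < t_i` and `p_i = 0` imply `p_j = 0`. -/
theorem stmt3 (t : ℕ → ℝ) (ht : IsTargetDist t) (M : ℕ) (hM : 0 < M) :
    ∃ p : ℕ → ℝ, IsMType M p ∧ (∀ q, IsMType M q → vd p t ≤ vd q t) ∧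
      ∀ i j, t j < t i → p i = 0 → p j = 0 := by
  obtain ⟨ht0, htmono, htsum⟩ := ht
  have hanti : Antitone t := antitone_nat_of_succ_le htmono
  have hfin : {p | IsMType M p ∧ IsZeroUpwardClosed p}.Finite :=
    (IsMType.finite_setOf_eq_zero_of_le M M).subset fun p ⟨hp, hpz⟩ =>
      ⟨hp, fun _ => hp.eq_zero_of_le hM hpz⟩
  obtain ⟨p, ⟨hp, hpz⟩, hmin⟩ := Set.exists_min_image _ (vd · t) hfin
    ⟨Pi.single 0 1, IsMType.single_zero hM, isZeroUpwardClosed_single_zero 1⟩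
  refine ⟨p, hp, fun q hq => ?_, fun i j hij hpi => hpz (hanti.reflect_lt hij).le hpi⟩
  obtain ⟨q', hq', hq'z, hle⟩ := exists_isZeroUpwardClosed_vd_le hM ht0 hanti htsum.summable hq
  exact (hmin q' ⟨hq', hq'z⟩).trans hle
end

section
/- Let M be a positive integer, let k ≤ M, and let t_1 ≥ t_2 ≥ ⋯ ≥ t_k ≥ 0 be a sub-probability vector with total mass Σ_{i=1}^k t_i = 1 − T for some 0 ≤ T ≤ 1. Then there exists an M-type probability distribution p supported on the indices {1, …, k} such that Σ_{i=1}^k |p_i − t_i| ≤ k/(2M) + M T²/(2k), and consequently Σ_{i=1}^k |p_i − t_i| ≤ k/(2M) + T. -/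
/-!
Scale by `M` and round every `x i = M * t i` down. This leaves `D = M - ∑ ⌊x i⌋₊ = F + M T`
units to hand out, where `F ≤ D` is the total of the fractional parts. If `D ≥ k`, every
coordinate gets at least one unit and the error is `D - F = M T`. If `D < k`, the `D`
coordinates with the largest fractional parts get one unit each; they carry at least `D F / k`
(a swap argument), so the error is at most `D + F - 2 D F / k`. In both cases the error is at
most `(k² + (M T)²) / (2k)` and at most `k / 2 + M T`, and dividing by `M` gives the bounds.
-/

section Rounding

open Finset

variable {ι : Type*} [DecidableEq ι]

theorem exists_subset_card_eq_forall_le_of_mem_sdiff (s : Finset ι) (f : ι → ℝ) {D : ℕ}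
    (hD : D ≤ #s) : ∃ S ⊆ s, #S = D ∧ ∀ i ∈ S, ∀ j ∈ s \ S, f j ≤ f i := by
  obtain ⟨S, hS, hmax⟩ := exists_max_image (s.powersetCard D) (fun S => ∑ i ∈ S, f i)
    (powersetCard_nonempty.mpr hD)
  rw [mem_powersetCard] at hS
  refine ⟨S, hS.1, hS.2, fun i hi j hj => ?_⟩
  rw [mem_sdiff] at hj
  have hji : j ∉ S.erase i := fun h => hj.2 (mem_of_mem_erase h)
  have hswap : insert j (S.erase i) ∈ s.powersetCard D := by
    rw [mem_powersetCard, card_insert_of_notMem hji, card_erase_of_mem hi, hS.2]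
    refine ⟨insert_subset hj.1 ((erase_subset i S).trans hS.1), ?_⟩
    have := card_pos.mpr ⟨i, hi⟩
    omega
  have hle := hmax _ hswap
  rw [sum_insert hji, ← sum_erase_add S f hi] at hle
  linarith

theorem exists_subset_card_eq_mul_sum_le (s : Finset ι) (f : ι → ℝ) {D : ℕ} (hD : D ≤ #s) :
    ∃ S ⊆ s, #S = D ∧ D * ∑ i ∈ s, f i ≤ #s * ∑ i ∈ S, f i := by
  obtain ⟨S, hSs, hSD, hdom⟩ := exists_subset_card_eq_forall_le_of_mem_sdiff s f hD
  refine ⟨S, hSs, hSD, ?_⟩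
  have hpair : ∑ _i ∈ S, ∑ j ∈ s \ S, f j ≤ ∑ i ∈ S, ∑ _j ∈ s \ S, f i :=
    sum_le_sum fun i hi => sum_le_sum fun j hj => hdom i hi j hj
  have hcard : (#(s \ S) : ℝ) = #s - D := by
    rw [card_sdiff_of_subset hSs, hSD, Nat.cast_sub hD]
  simp only [sum_const, nsmul_eq_mul, ← mul_sum, hSD, hcard] at hpair
  rw [← sum_sdiff hSs]
  linarith

theorem exists_indicator_sum_abs_sub_le (s : Finset ι) (f : ι → ℝ)
    (hf0 : ∀ i ∈ s, 0 ≤ f i) (hf1 : ∀ i ∈ s, f i ≤ 1) {D : ℕ} (hD : D ≤ #s) :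
    ∃ e : ι → ℕ, ∑ i ∈ s, e i = D ∧
      #s * ∑ i ∈ s, |(e i : ℝ) - f i| ≤ #s * (D + ∑ i ∈ s, f i) - 2 * D * ∑ i ∈ s, f i := by
  obtain ⟨S, hSs, hSD, havg⟩ := exists_subset_card_eq_mul_sum_le s f hD
  refine ⟨fun i => if i ∈ S then 1 else 0, ?_, ?_⟩
  · rw [sum_ite_mem, inter_eq_right.mpr hSs]
    simp [hSD]
  · have hin : ∑ i ∈ S, |((if i ∈ S then 1 else 0 : ℕ) : ℝ) - f i| = D - ∑ i ∈ S, f i := by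
      have h1 : ∀ i ∈ S, |((if i ∈ S then 1 else 0 : ℕ) : ℝ) - f i| = 1 - f i := fun i hi => by
        rw [if_pos hi, Nat.cast_one, abs_of_nonneg (by linarith [hf1 i (hSs hi)])]
      rw [sum_congr rfl h1, sum_sub_distrib, sum_const, hSD, nsmul_one]
    have hout : ∑ i ∈ s \ S, |((if i ∈ S then 1 else 0 : ℕ) : ℝ) - f i|
        = ∑ i ∈ s, f i - ∑ i ∈ S, f i := by
      rw [← sum_sdiff hSs, add_sub_cancel_right]
      refine sum_congr rfl fun i hi => ?_
      rw [mem_sdiff] at hi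
      rw [if_neg hi.2, Nat.cast_zero, zero_sub, abs_neg, abs_of_nonneg (hf0 i hi.1)]
    rw [← sum_sdiff hSs, hin, hout]
    linarith

theorem exists_sum_abs_sub_eq_of_card_le (s : Finset ι) (hs : s.Nonempty) (f : ι → ℝ)
    (hf1 : ∀ i ∈ s, f i ≤ 1) {D : ℕ} (hD : #s ≤ D) :
    ∃ e : ι → ℕ, ∑ i ∈ s, e i = D ∧ ∑ i ∈ s, |(e i : ℝ) - f i| = D - ∑ i ∈ s, f i := by
  obtain ⟨a, ha⟩ := hs
  set e : ι → ℕ := fun i => 1 + if i = a then D - #s else 0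
  have he : ∑ i ∈ s, e i = D := by
    simp only [e, sum_add_distrib, sum_const, smul_eq_mul, mul_one, sum_ite_eq' s a, if_pos ha]
    omega
  refine ⟨e, he, ?_⟩
  have habs : ∀ i ∈ s, |(e i : ℝ) - f i| = e i - f i := fun i hi => by
    have : (1 : ℝ) ≤ e i := by exact_mod_cast Nat.le_add_right 1 _
    exact abs_of_nonneg (by linarith [hf1 i hi])
  rw [sum_congr rfl habs, sum_sub_distrib, ← Nat.cast_sum, he]

theorem exists_nat_sum_eq_abs_sub_le (s : Finset ι) (hs : s.Nonempty) (f : ι → ℝ)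
    (hf0 : ∀ i ∈ s, 0 ≤ f i) (hf1 : ∀ i ∈ s, f i ≤ 1) {D : ℕ} (hFD : ∑ i ∈ s, f i ≤ D) :
    ∃ e : ι → ℕ, ∑ i ∈ s, e i = D ∧
      2 * #s * ∑ i ∈ s, |(e i : ℝ) - f i| ≤ #s ^ 2 + (D - ∑ i ∈ s, f i) ^ 2 ∧
      2 * ∑ i ∈ s, |(e i : ℝ) - f i| ≤ #s + 2 * (D - ∑ i ∈ s, f i) := by
  have hk : (0 : ℝ) < #s := by exact_mod_cast hs.card_pos
  have hF0 : 0 ≤ ∑ i ∈ s, f i := sum_nonneg hf0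
  rcases le_total D #s with hD | hD
  · obtain ⟨e, he, herr⟩ := exists_indicator_sum_abs_sub_le s f hf0 hf1 hD
    have hDk : (D : ℝ) ≤ #s := by exact_mod_cast hD
    refine ⟨e, he, by nlinarith [sq_nonneg ((#s : ℝ) - D - ∑ i ∈ s, f i)], ?_⟩
    -- `4 F (k - D) ≤ 4 D (k - D) ≤ k²`
    have : 4 * (∑ i ∈ s, f i) * (#s - D) ≤ (#s : ℝ) ^ 2 := by
      nlinarith [sq_nonneg ((#s : ℝ) - 2 * D), mul_le_mul_of_nonneg_right hFD (sub_nonneg.2 hDk)]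
    nlinarith
  · obtain ⟨e, he, herr⟩ := exists_sum_abs_sub_eq_of_card_le s hs f hf1 hD
    refine ⟨e, he, ?_, ?_⟩ <;> rw [herr]
    · nlinarith [sq_nonneg ((#s : ℝ) - (D - ∑ i ∈ s, f i))]
    · linarith

theorem exists_nat_sum_eq_abs_sub_le_of_nonneg (s : Finset ι) (hs : s.Nonempty) (x : ι → ℝ)
    (hx : ∀ i ∈ s, 0 ≤ x i) {N : ℕ} (hN : ∑ i ∈ s, x i ≤ N) :
    ∃ d : ι → ℕ, (∀ i ∉ s, d i = 0) ∧ ∑ i ∈ s, d i = N ∧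
      2 * #s * ∑ i ∈ s, |(d i : ℝ) - x i| ≤ #s ^ 2 + (N - ∑ i ∈ s, x i) ^ 2 ∧
      2 * ∑ i ∈ s, |(d i : ℝ) - x i| ≤ #s + 2 * (N - ∑ i ∈ s, x i) := by
  set c : ι → ℕ := fun i => ⌊x i⌋₊
  have hc : ∀ i ∈ s, (c i : ℝ) ≤ x i := fun i hi => Nat.floor_le (hx i hi)
  have hCN : ∑ i ∈ s, c i ≤ N := by
    have : ((∑ i ∈ s, c i : ℕ) : ℝ) ≤ N := by push_cast; linarith [sum_le_sum hc]
    exact_mod_cast this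
  have hfrac : ∑ i ∈ s, (x i - c i) = ∑ i ∈ s, x i - ∑ i ∈ s, c i := by
    rw [sum_sub_distrib, Nat.cast_sum]
  obtain ⟨e, he, hsq, hlin⟩ := exists_nat_sum_eq_abs_sub_le s hs (fun i => x i - c i)
    (fun i hi => sub_nonneg.2 (hc i hi))
    (fun i _ => by linarith [Nat.lt_floor_add_one (x i)]) (D := N - ∑ i ∈ s, c i)
    (by rw [hfrac, Nat.cast_sub hCN]; linarith)
  have hdsum : ∑ i ∈ s, (if i ∈ s then c i + e i else 0) = N := by
    rw [sum_ite_mem, inter_self, sum_add_distrib, he]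
    omega
  have hdev : ∀ i ∈ s, |((if i ∈ s then c i + e i else 0 : ℕ) : ℝ) - x i|
      = |(e i : ℝ) - (x i - c i)| := fun i hi => by rw [if_pos hi]; push_cast; ring_nf
  have hgap : (N : ℝ) - ∑ i ∈ s, x i = (N - ∑ i ∈ s, c i : ℕ) - ∑ i ∈ s, (x i - c i) := by
    rw [hfrac, Nat.cast_sub hCN]; push_cast; ring
  refine ⟨fun i => if i ∈ s then c i + e i else 0, fun i hi => if_neg hi, hdsum, ?_⟩
  rw [sum_congr rfl hdev, hgap]
  exact ⟨hsq, hlin⟩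

end Rounding

theorem isMType_natCast_div {M : ℕ} (hM : M ≠ 0) (s : Finset ℕ) (d : ℕ → ℕ)
    (hd : ∀ i ∉ s, d i = 0) (hsum : ∑ i ∈ s, d i = M) : IsMType M (fun i => (d i : ℝ) / M) := by
  refine ⟨?_, d, fun i => ?_, fun i => rfl⟩
  · have hs : ∑ i ∈ s, (d i : ℝ) / M = 1 := by
      rw [← Finset.sum_div, ← Nat.cast_sum, hsum, div_self (Nat.cast_ne_zero.2 hM)]
    exact hs ▸ hasSum_sum_of_ne_finset_zero fun i hi => by simp [hd i hi]
  · by_cases hi : i ∈ s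
    · exact hsum ▸ Finset.single_le_sum (fun j _ => Nat.zero_le (d j)) hi
    · simp [hd i hi]

theorem stmt4_general (M k : ℕ) (hM : 0 < M) (hk : 0 < k)
    (t : ℕ → ℝ) (T : ℝ) (hT0 : 0 ≤ T)
    (hnn : ∀ i, i < k → 0 ≤ t i)
    (hsum : ∑ i ∈ Finset.range k, t i = 1 - T) :
    ∃ p : ℕ → ℝ, IsMType M p ∧ (∀ i, k ≤ i → p i = 0) ∧
      (∑ i ∈ Finset.range k, |p i - t i|) ≤ (k : ℝ) / (2 * M) + M * T ^ 2 / (2 * k) ∧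
      (∑ i ∈ Finset.range k, |p i - t i|) ≤ (k : ℝ) / (2 * M) + T := by
  have hM' : (0 : ℝ) < M := by exact_mod_cast hM
  have hk' : (0 : ℝ) < k := by exact_mod_cast hk
  have hmass : ∑ i ∈ Finset.range k, (M : ℝ) * t i = M - M * T := by
    rw [← Finset.mul_sum, hsum]; ring
  obtain ⟨d, hd0, hdM, hsq, hlin⟩ := exists_nat_sum_eq_abs_sub_le_of_nonneg (Finset.range k)
    (Finset.nonempty_range_iff.2 hk.ne') (fun i => M * t i)
    (fun i hi => mul_nonneg hM'.le (hnn i (Finset.mem_range.1 hi))) (N := M)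
    (by rw [hmass]; nlinarith)
  rw [hmass, Finset.card_range] at hsq hlin
  have herr : ∑ i ∈ Finset.range k, |(d i : ℝ) / M - t i|
      = (∑ i ∈ Finset.range k, |(d i : ℝ) - M * t i|) / M := by
    rw [Finset.sum_div]
    refine Finset.sum_congr rfl fun i _ => ?_
    rw [← abs_of_pos hM', ← abs_div, abs_of_pos hM', sub_div, mul_div_cancel_left₀ _ hM'.ne']
  refine ⟨_, isMType_natCast_div hM.ne' _ d hd0 hdM,
    fun i hi => by simp [hd0 i (by simpa using hi)], ?_, ?_⟩ <;> rw [herr, div_le_iff₀ hM']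
  · rw [div_add_div _ _ (by positivity) (by positivity), div_mul_eq_mul_div,
      le_div_iff₀ (by positivity)]
    nlinarith
  · rw [add_mul, div_mul_eq_mul_div, mul_div_mul_right _ _ hM'.ne']
    linarith

/-- for an ordered sub-probability vector `t_1 ≥ ⋯ ≥ t_k ≥ 0` with total
mass `1 − T` and `k ≤ M`, there is an `M`-type probability distribution `p` supported
on the first `k` indices with
`Σ_{i<k} |p_i − t_i| ≤ k/(2M) + M T²/(2k)` and consequently `≤ k/(2M) + T`. -/
theorem stmt4 (M k : ℕ) (hM : 0 < M) (hk : 0 < k) (hkM : k ≤ M)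
    (t : ℕ → ℝ) (T : ℝ) (hT0 : 0 ≤ T) (hT1 : T ≤ 1)
    (hnn : ∀ i, i < k → 0 ≤ t i)
    (hord : ∀ i, i + 1 < k → t (i + 1) ≤ t i)
    (hsum : ∑ i ∈ Finset.range k, t i = 1 - T) :
    ∃ p : ℕ → ℝ, IsMType M p ∧ (∀ i, k ≤ i → p i = 0) ∧
      (∑ i ∈ Finset.range k, |p i - t i|) ≤ (k : ℝ) / (2 * M) + M * T ^ 2 / (2 * k) ∧
      (∑ i ∈ Finset.range k, |p i - t i|) ≤ (k : ℝ) / (2 * M) + T :=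
  stmt4_general M k hM hk t T hT0 hnn hsum
end

section
/- Let M be a positive integer, let k ≤ M, and let t_1 ≥ t_2 ≥ ⋯ ≥ t_k ≥ 0 be a sub-probability vector with total mass Σ_{i=1}^k t_i = 1 − T, where T ≥ k/M. Then every M-type probability distribution p supported on {1, …, k} satisfies Σ_{i=1}^k |p_i − t_i| ≥ T, and there exists an M-type probability distribution p supported on {1, …, k} with Σ_{i=1}^k |p_i − t_i| = T. -/
/-!
Since `p` sums to one and `t` to `1 - T`, the distance `∑ |p i - t i|` is at least
`∑ (p i - t i) = T`, with equality exactly when `p` dominates `t`. Such a `p` exists: rounding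
each `M t_i` up costs less than one unit per index, so the ceilings sum to at most
`M (1 - T) + k ≤ M`, and the leftover units can all be put on the first index.
-/

open Finset

theorem hasSum_iff_sum_range_of_eq_zero {α : Type*} [AddCommMonoid α] [TopologicalSpace α]
    [T2Space α] {f : ℕ → α} {k : ℕ} (hf : ∀ i, k ≤ i → f i = 0) {a : α} :
    HasSum f a ↔ ∑ i ∈ range k, f i = a := by
  have h : HasSum f (∑ i ∈ range k, f i) :=
    hasSum_sum_of_ne_finset_zero fun i hi => hf i (by simpa using hi)
  exact ⟨h.unique, fun ha => ha ▸ h⟩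

section Distance

variable {ι α : Type*} [AddCommGroup α] [LinearOrder α] [IsOrderedAddMonoid α]
  (s : Finset ι)

theorem sum_sub_sum_le_sum_abs_sub (p t : ι → α) : ∑ i ∈ s, p i - ∑ i ∈ s, t i ≤ ∑ i ∈ s, |p i - t i| := by
  rw [← sum_sub_distrib]
  exact sum_le_sum fun i _ => le_abs_self _

theorem sum_abs_sub_of_le {p t : ι → α} (h : ∀ i ∈ s, t i ≤ p i) :
    ∑ i ∈ s, |p i - t i| = ∑ i ∈ s, p i - ∑ i ∈ s, t i := by
  rw [← sum_sub_distrib]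
  exact sum_congr rfl fun i hi => abs_of_nonneg (sub_nonneg.mpr (h i hi))

end Distance

theorem sum_natCeil_le {ι : Type*} (s : Finset ι) {x : ι → ℝ} (hx : ∀ i ∈ s, 0 ≤ x i) :
    ((∑ i ∈ s, ⌈x i⌉₊ : ℕ) : ℝ) ≤ ∑ i ∈ s, x i + #s := by
  calc ((∑ i ∈ s, ⌈x i⌉₊ : ℕ) : ℝ) ≤ ∑ i ∈ s, (x i + 1) := by
        push_cast
        exact sum_le_sum fun i hi => (Nat.ceil_lt_add_one (hx i hi)).le
    _ = ∑ i ∈ s, x i + #s := by simp [sum_add_distrib]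

theorem exists_le_sum_range_eq {d : ℕ → ℕ} {k M : ℕ} (hk : 0 < k)
    (hd : ∑ i ∈ range k, d i ≤ M) :
    ∃ c : ℕ → ℕ, (∀ i < k, d i ≤ c i) ∧ (∀ i, k ≤ i → c i = 0) ∧ ∑ i ∈ range k, c i = M := by
  refine ⟨fun i => if i < k then d i + if i = 0 then M - ∑ j ∈ range k, d j else 0 else 0,
    fun i hi => by simp [hi], fun i hi => by simp [not_lt.mpr hi], ?_⟩
  rw [sum_congr rfl fun i hi => if_pos (mem_range.mp hi), sum_add_distrib,
    sum_ite_eq' (range k), if_pos (mem_range.mpr hk)]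
  omega

theorem isMType_of_sum_range_eq {M k : ℕ} (hM : 0 < M) {c : ℕ → ℕ}
    (hc : ∀ i, k ≤ i → c i = 0) (hsum : ∑ i ∈ range k, c i = M) :
    IsMType M fun i => (c i : ℝ) / M := by
  refine ⟨(hasSum_iff_sum_range_of_eq_zero (k := k) fun i hi => by simp [hc i hi]).mpr ?_, c,
    fun i => ?_, fun _ => rfl⟩
  · rw [← sum_div, ← Nat.cast_sum, hsum, div_self (by positivity)]
  · rcases lt_or_ge i k with hi | hi
    · exact hsum ▸ single_le_sum (fun j _ => Nat.zero_le _) (mem_range.mpr hi)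
    · simp [hc i hi]

theorem exists_isMType_ge {M k : ℕ} (hM : 0 < M) (hk : 0 < k) {t : ℕ → ℝ}
    (hnn : ∀ i < k, 0 ≤ t i) (hmass : k + M * ∑ i ∈ range k, t i ≤ M) :
    ∃ p : ℕ → ℝ, IsMType M p ∧ (∀ i, k ≤ i → p i = 0) ∧ ∀ i < k, t i ≤ p i := by
  have hM' : (0 : ℝ) < M := by exact_mod_cast hM
  have hceil : ∑ i ∈ range k, ⌈M * t i⌉₊ ≤ M := by
    have := sum_natCeil_le (range k) fun i hi => mul_nonneg hM'.le (hnn i (mem_range.mp hi))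
    rw [← mul_sum, card_range] at this
    exact_mod_cast (this.trans (by linarith) : _ ≤ (M : ℝ))
  obtain ⟨c, hdc, hc, hsum⟩ := exists_le_sum_range_eq hk hceil
  refine ⟨fun i => (c i : ℝ) / M, isMType_of_sum_range_eq hM hc hsum,
    fun i hi => by simp [hc i hi], fun i hi => ?_⟩
  rw [le_div_iff₀ hM', mul_comm]
  exact (Nat.le_ceil _).trans (by exact_mod_cast hdc i hi)

theorem stmt5_general (M k : ℕ) (hM : 0 < M) (hk : 0 < k)
    (t : ℕ → ℝ) (T : ℝ) (hT : (k : ℝ) / M ≤ T)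
    (hnn : ∀ i, i < k → 0 ≤ t i)
    (hsum : ∑ i ∈ Finset.range k, t i = 1 - T) :
    (∀ p : ℕ → ℝ, IsMType M p → (∀ i, k ≤ i → p i = 0) →
      T ≤ ∑ i ∈ Finset.range k, |p i - t i|) ∧
    ∃ p : ℕ → ℝ, IsMType M p ∧ (∀ i, k ≤ i → p i = 0) ∧
      (∑ i ∈ Finset.range k, |p i - t i|) = T := by
  have hpsum {p : ℕ → ℝ} (hp : IsMType M p) (hsupp : ∀ i, k ≤ i → p i = 0) :
      ∑ i ∈ range k, p i = 1 :=
    (hasSum_iff_sum_range_of_eq_zero hsupp).mp hp.1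
  refine ⟨fun p hp hsupp => ?_, ?_⟩
  · have := sum_sub_sum_le_sum_abs_sub (range k) p t
    rw [hpsum hp hsupp, hsum] at this
    linarith
  · have hmass : k + M * ∑ i ∈ range k, t i ≤ M := by
      rw [div_le_iff₀ (by exact_mod_cast hM)] at hT
      rw [hsum]
      linarith
    obtain ⟨p, hp, hsupp, hge⟩ := exists_isMType_ge hM hk hnn hmass
    refine ⟨p, hp, hsupp, ?_⟩
    rw [sum_abs_sub_of_le _ fun i hi => hge i (mem_range.mp hi), hpsum hp hsupp, hsum]
    ring

/-- for an ordered sub-probability vector `t_1 ≥ ⋯ ≥ t_k ≥ 0` with total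
mass `1 − T`, `k ≤ M` and `T ≥ k/M`: every `M`-type probability distribution supported
on the first `k` indices has variational distance at least `T` from `t`, and this
distance `T` is achieved by some such distribution. -/
theorem stmt5 (M k : ℕ) (hM : 0 < M) (hk : 0 < k) (hkM : k ≤ M)
    (t : ℕ → ℝ) (T : ℝ) (hT : (k : ℝ) / M ≤ T) (hT1 : T ≤ 1)
    (hnn : ∀ i, i < k → 0 ≤ t i)
    (hord : ∀ i, i + 1 < k → t (i + 1) ≤ t i)
    (hsum : ∑ i ∈ Finset.range k, t i = 1 - T) :
    (∀ p : ℕ → ℝ, IsMType M p → (∀ i, k ≤ i → p i = 0) →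
      T ≤ ∑ i ∈ Finset.range k, |p i - t i|) ∧
    ∃ p : ℕ → ℝ, IsMType M p ∧ (∀ i, k ≤ i → p i = 0) ∧
      (∑ i ∈ Finset.range k, |p i - t i|) = T :=
  stmt5_general M k hM hk t T hT hnn hsum
end

section
/- Let t be a target distribution with finite support of cardinality n, and let M be a positive integer with n ≤ M. Then there exists an M-type distribution p with ‖p − t‖₁ ≤ n/(2M); in particular, the minimum of the variational distance to t over all M-type distributions is at most n/(2M). -/
/-!
Scale `t` to `g = M t`, whose entries sum to the integer `M`. Rounding every entry down loses
a total of `d = Σ frac(g_i)`, an integer at most `n`; rounding up instead the `d` entries with the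
largest fractional parts restores the sum `M` and costs `2(d - S)`, where `S` is the sum of
those `d` fractional parts. They are at least as large on average as the other ones, so
`d (d - S) ≤ (n - d) S`, i.e. `S ≥ d² / n`, whence `2(d - S) ≤ 2d(n - d)/n ≤ n/2`.
-/

open Finset

namespace Finset

variable {ι α : Type*}

theorem exists_subset_card_eq_forall_sdiff_le [DecidableEq ι] [AddCommGroup α] [LinearOrder α]
    [IsOrderedAddMonoid α] (s : Finset ι) (f : ι → α) {d : ℕ} (hd : d ≤ #s) :
    ∃ T ⊆ s, #T = d ∧ ∀ i ∈ T, ∀ j ∈ s \ T, f j ≤ f i := by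
  obtain ⟨T₀, hT₀⟩ := exists_subset_card_eq hd
  obtain ⟨T, hT, hmax⟩ := (s.powersetCard d).exists_max_image (fun T => ∑ i ∈ T, f i)
    ⟨T₀, mem_powersetCard.mpr hT₀⟩
  obtain ⟨hTs, hTcard⟩ := mem_powersetCard.mp hT
  refine ⟨T, hTs, hTcard, fun i hi j hj => ?_⟩
  obtain ⟨hjs, hjT⟩ := mem_sdiff.mp hj
  have hj' : j ∉ T.erase i := fun h => hjT (mem_of_mem_erase h)
  have hswap : insert j (T.erase i) ∈ s.powersetCard d := by
    refine mem_powersetCard.mpr ⟨insert_subset hjs ((erase_subset i T).trans hTs), ?_⟩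
    rw [card_insert_of_notMem hj', card_erase_of_mem hi, ← hTcard,
      Nat.sub_add_cancel (card_pos.mpr ⟨i, hi⟩)]
  have := hmax _ hswap
  rw [sum_insert hj', sum_erase_eq_sub hi] at this
  rwa [add_sub_left_comm, add_le_iff_nonpos_right, sub_nonpos] at this

theorem card_nsmul_sum_le_card_nsmul_sum [AddCommMonoid α] [PartialOrder α]
    [IsOrderedAddMonoid α] {A B : Finset ι} {f : ι → α} (h : ∀ i ∈ A, ∀ j ∈ B, f j ≤ f i) :
    #A • ∑ j ∈ B, f j ≤ #B • ∑ i ∈ A, f i := by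
  calc #A • ∑ j ∈ B, f j = ∑ _i ∈ A, ∑ j ∈ B, f j := (sum_const _).symm
    _ ≤ ∑ i ∈ A, ∑ _j ∈ B, f i := sum_le_sum fun i hi => sum_le_sum fun j hj => h i hi j hj
    _ = #B • ∑ i ∈ A, f i := by simp only [sum_const, smul_sum]

theorem exists_subset_card_eq_sum_sdiff_add_sum_one_sub_le [DecidableEq ι] {s : Finset ι}
    {f : ι → ℝ} (hf : ∀ i ∈ s, f i < 1) {d : ℕ} (hd : ∑ i ∈ s, f i = d) :
    ∃ T ⊆ s, #T = d ∧ ∑ i ∈ s \ T, f i + ∑ i ∈ T, (1 - f i) ≤ #s / 2 := by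
  have hds : d ≤ #s := by
    have : ∑ i ∈ s, f i ≤ #s := by simpa using sum_le_sum fun i hi => (hf i hi).le
    exact_mod_cast hd ▸ this
  obtain ⟨T, hTs, hTcard, hTtop⟩ := s.exists_subset_card_eq_forall_sdiff_le f hds
  refine ⟨T, hTs, hTcard, ?_⟩
  set S := ∑ i ∈ T, f i
  have hrest : ∑ i ∈ s \ T, f i = d - S := by linarith [sum_sdiff (f := f) hTs]
  have hup : ∑ i ∈ T, (1 - f i) = d - S := by simp [sum_sub_distrib, hTcard, S]
  have hbalance : (d : ℝ) * (d - S) ≤ (#s - d) * S := by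
    have := card_nsmul_sum_le_card_nsmul_sum hTtop
    rwa [nsmul_eq_mul, nsmul_eq_mul, card_sdiff_of_subset hTs, hTcard, hrest,
      Nat.cast_sub hds] at this
  rw [hrest, hup]
  rcases (Nat.zero_le #s).eq_or_lt with hs | hs
  · have hd0 : d = 0 := by omega
    subst hd0
    simp [S, ← hs, card_eq_zero.mp (by omega : #T = 0)]
  · have hs' : (0 : ℝ) < #s := by exact_mod_cast hs
    rw [le_div_iff₀ two_pos]
    nlinarith [sq_nonneg ((#s : ℝ) - 2 * d)]

theorem exists_nat_sum_eq_sum_abs_sub_le [DecidableEq ι] {s : Finset ι} {g : ι → ℝ}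
    (hg : ∀ i ∈ s, 0 ≤ g i) {M : ℕ} (hsum : ∑ i ∈ s, g i = M) :
    ∃ c : ι → ℕ, (∀ i ∉ s, c i = 0) ∧ ∑ i ∈ s, c i = M ∧
      ∑ i ∈ s, |(c i : ℝ) - g i| ≤ #s / 2 := by
  set k : ι → ℕ := fun i => ⌊g i⌋₊
  set f : ι → ℝ := fun i => g i - k i
  have hfloor : ∀ i ∈ s, 0 ≤ f i ∧ f i < 1 := fun i hi =>
    ⟨sub_nonneg.mpr (Nat.floor_le (hg i hi)), by linarith [Nat.lt_floor_add_one (g i)]⟩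
  have hkM : ∑ i ∈ s, k i ≤ M := by
    have : ∑ i ∈ s, (k i : ℝ) ≤ M := hsum ▸ sum_le_sum fun i hi => Nat.floor_le (hg i hi)
    exact_mod_cast this
  have hfsum : ∑ i ∈ s, f i = ↑(M - ∑ i ∈ s, k i) := by
    simp [f, sum_sub_distrib, hsum, Nat.cast_sub hkM]
  obtain ⟨T, hTs, hTcard, herr⟩ := exists_subset_card_eq_sum_sdiff_add_sum_one_sub_le
    (fun i hi => (hfloor i hi).2) hfsum
  set c : ι → ℕ := fun i => if i ∈ T then k i + 1 else if i ∈ s then k i else 0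
  have hcT : ∀ i ∈ T, c i = k i + 1 := fun i hi => if_pos hi
  have hcS : ∀ i ∈ s \ T, c i = k i := fun i hi => by
    simp [c, (mem_sdiff.mp hi).1, (mem_sdiff.mp hi).2]
  refine ⟨c, fun i hi => ?_, ?_, ?_⟩
  · simp [c, hi, show i ∉ T from fun h => hi (hTs h)]
  · rw [← sum_sdiff hTs, sum_congr rfl hcS, sum_congr rfl hcT, sum_add_distrib, sum_const,
      smul_eq_mul, mul_one, hTcard, ← add_assoc, sum_sdiff hTs, Nat.add_sub_cancel' hkM]
  · calc ∑ i ∈ s, |(c i : ℝ) - g i|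
        = ∑ i ∈ s \ T, f i + ∑ i ∈ T, (1 - f i) := by
          rw [← sum_sdiff hTs]
          congr 1 <;> refine sum_congr rfl fun i hi => ?_
          · rw [hcS i hi, abs_sub_comm, abs_of_nonneg (hfloor i (sdiff_subset hi)).1]
          · rw [hcT i hi, Nat.cast_succ, abs_of_nonneg (by linarith [(hfloor i (hTs hi)).2])]
            ring
      _ ≤ #s / 2 := herr

end Finset

theorem vd_eq_sum {p t : ℕ → ℝ} {s : Finset ℕ} (hp : ∀ i ∉ s, p i = 0) (ht : ∀ i ∉ s, t i = 0) :
    vd p t = ∑ i ∈ s, |p i - t i| :=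
  tsum_eq_sum fun i hi => by simp [hp i hi, ht i hi]

theorem isMType_div {M : ℕ} (hM : 0 < M) {c : ℕ → ℕ} {s : Finset ℕ} (hc : ∀ i ∉ s, c i = 0)
    (hsum : ∑ i ∈ s, c i = M) : IsMType M fun i => (c i : ℝ) / M := by
  refine ⟨?_, c, fun i => ?_, fun i => rfl⟩
  · have : HasSum (fun i => (c i : ℝ) / M) (∑ i ∈ s, (c i : ℝ) / M) :=
      hasSum_sum_of_ne_finset_zero fun i hi => by simp [hc i hi]
    rwa [← sum_div, ← Nat.cast_sum, hsum, div_self (by positivity)] at this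
  · by_cases hi : i ∈ s
    · exact hsum ▸ single_le_sum (fun _ _ => Nat.zero_le _) hi
    · simp [hc i hi]

theorem stmt6_general (t : ℕ → ℝ) (ht : IsTargetDist t) (n : ℕ)
    (hzero : ∀ i, n ≤ i → t i = 0)
    (M : ℕ) (hM : 0 < M) :
    ∃ p : ℕ → ℝ, IsMType M p ∧ vd p t ≤ (n : ℝ) / (2 * M) := by
  obtain ⟨ht0, -, htsum⟩ := ht
  have hsupp : ∀ i ∉ range n, t i = 0 := fun i hi => hzero i (by simpa using hi)
  have hsum : ∑ i ∈ range n, (M : ℝ) * t i = M := by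
    rw [← mul_sum, (hasSum_sum_of_ne_finset_zero hsupp).unique htsum, mul_one]
  obtain ⟨c, hc0, hcM, herr⟩ :=
    exists_nat_sum_eq_sum_abs_sub_le (fun i _ => mul_nonneg M.cast_nonneg (ht0 i)) hsum
  have hMR : (0 : ℝ) < M := by exact_mod_cast hM
  refine ⟨fun i => (c i : ℝ) / M, isMType_div hM hc0 hcM, ?_⟩
  calc vd (fun i => (c i : ℝ) / M) t
      = (∑ i ∈ range n, |(c i : ℝ) - M * t i|) / M := by
        rw [vd_eq_sum (fun i hi => by simp [hc0 i hi]) hsupp, sum_div]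
        refine sum_congr rfl fun i _ => ?_
        rw [← abs_of_pos hMR, ← abs_div, abs_of_pos hMR, sub_div, mul_div_cancel_left₀ _ hMR.ne']
    _ ≤ (n : ℝ) / 2 / M := by simpa using div_le_div_of_nonneg_right herr hMR.le
    _ = n / (2 * M) := div_div _ _ _

/-- if the target distribution `t` has finite support of size `n ≤ M`,
then some `M`-type distribution `p` satisfies `‖p − t‖₁ ≤ n/(2M)`. -/
theorem stmt6 (t : ℕ → ℝ) (ht : IsTargetDist t) (n : ℕ)
    (hpos : ∀ i, i < n → 0 < t i) (hzero : ∀ i, n ≤ i → t i = 0)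
    (M : ℕ) (hM : 0 < M) (hnM : n ≤ M) :
    ∃ p : ℕ → ℝ, IsMType M p ∧ vd p t ≤ (n : ℝ) / (2 * M) :=
  stmt6_general t ht n hzero M hM
end

section
/- Let ρ > 0 and let t be the Yule–Simon distribution t_i = ρ · B(i, ρ+1). Then for every integer M ≥ 2, M · B(M, ρ+1) ≥ K(ρ)/(M+ρ)^ρ with the positive constant K(ρ) = Γ(ρ+1)/(4√(2(1+ρ))), and consequently every M-type probability distribution p satisfies ‖p − t‖₁ ≥ T_M = M · B(M, ρ+1) ≥ K(ρ)/(M+ρ)^ρ. -/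
/-!
Both estimates on `M B(M, ρ+1)` come from the log-convexity of `Γ`: comparing slopes of `log Γ`
on adjacent intervals gives `Γ(x+1) x^y ≤ Γ(x+1+y)` and `Γ(x+y) ≤ Γ(x) (x+y)^y`.
The identity `B(x, y) = B(x+1, y) + B(x, y+1)` makes the Yule–Simon tail telescope, and the first
bound makes `B(x+n, y) → 0`, so `T_M = ρ B(M+1, ρ) = M B(M, ρ+1)`. The second bound gives
`ρ B(M+1, ρ) ≥ Γ(ρ+1)/(M+1+ρ)^ρ ≥ Γ(ρ+1)/(e (M+ρ)^ρ)`, and `e ≤ 4 ≤ 4√(2(1+ρ))`.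
An `M`-type `p` vanishes outside a set `S` of at most `M` indices, where `|p_i - t_i| = t_i`;
as `t` is decreasing, `S` carries at most the mass of the first `M` entries of `t`, so the
complement of `S` carries at least `T_M`.
-/

/-- The Beta function `B(x, y) = Γ(x)Γ(y)/Γ(x+y)`. -/
noncomputable def betaFn (x y : ℝ) : ℝ :=
  Real.Gamma x * Real.Gamma y / Real.Gamma (x + y)

open Real Filter Finset Topology

namespace Real

lemma log_Gamma_slope_le_slope {a b c : ℝ} (ha : 0 < a) (hab : a < b) (hbc : b < c) :
    (log (Gamma b) - log (Gamma a)) / (b - a) ≤ (log (Gamma c) - log (Gamma b)) / (c - b) :=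
  convexOn_log_Gamma.slope_mono_adjacent ha (show 0 < c by linarith) hab hbc

lemma log_Gamma_add_one {x : ℝ} (hx : 0 < x) : log (Gamma (x + 1)) = log (Gamma x) + log x := by
  rw [Gamma_add_one hx.ne', log_mul hx.ne' (Gamma_pos_of_pos hx).ne', add_comm]

lemma Gamma_add_le_Gamma_mul_rpow {x y : ℝ} (hx : 0 < x) (hy : 0 < y) :
    Gamma (x + y) ≤ Gamma x * (x + y) ^ y := by
  have hxy : 0 < x + y := by linarith
  have hslope := log_Gamma_slope_le_slope hx (by linarith : x < x + y) (lt_add_one (x + y))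
  rw [log_Gamma_add_one hxy, add_sub_cancel_left, add_sub_cancel_left, add_sub_cancel_left,
    div_one, div_le_iff₀ hy] at hslope
  rw [← log_le_log_iff (Gamma_pos_of_pos hxy) (by positivity),
    log_mul (Gamma_pos_of_pos hx).ne' (by positivity), log_rpow hxy]
  linarith

lemma Gamma_add_one_mul_rpow_le {x y : ℝ} (hx : 0 < x) (hy : 0 < y) :
    Gamma (x + 1) * x ^ y ≤ Gamma (x + 1 + y) := by
  have hslope := log_Gamma_slope_le_slope hx (lt_add_one x) (by linarith : x + 1 < x + 1 + y)
  rw [log_Gamma_add_one hx, add_sub_cancel_left, add_sub_cancel_left, add_sub_cancel_left,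
    div_one, le_div_iff₀ hy] at hslope
  rw [← log_le_log_iff (by positivity) (Gamma_pos_of_pos (by linarith)),
    log_mul (Gamma_pos_of_pos (by linarith)).ne' (by positivity), log_rpow hx,
    log_Gamma_add_one hx]
  linarith

end Real

section Beta

variable {x y : ℝ}

lemma betaFn_pos (hx : 0 < x) (hy : 0 < y) : 0 < betaFn x y :=
  div_pos (mul_pos (Gamma_pos_of_pos hx) (Gamma_pos_of_pos hy)) (Gamma_pos_of_pos (add_pos hx hy))

lemma betaFn_one_left (hy : 0 < y) : betaFn 1 y = 1 / y := by
  rw [betaFn, Gamma_one, add_comm, Gamma_add_one hy.ne']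
  field_simp [(Gamma_pos_of_pos hy).ne']

lemma betaFn_add_one_left_add_betaFn_add_one_right (hx : 0 < x) (hy : 0 < y) :
    betaFn (x + 1) y + betaFn x (y + 1) = betaFn x y := by
  rw [betaFn, betaFn, betaFn, Gamma_add_one hx.ne', Gamma_add_one hy.ne',
    show x + 1 + y = x + y + 1 by ring, show x + (y + 1) = x + y + 1 by ring,
    Gamma_add_one (add_pos hx hy).ne']
  field_simp

lemma betaFn_add_one_left_le (hx : 0 < x) (hy : 0 < y) : betaFn (x + 1) y ≤ betaFn x y := by
  rw [← betaFn_add_one_left_add_betaFn_add_one_right hx hy]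
  linarith [betaFn_pos hx (by linarith : 0 < y + 1)]

lemma mul_betaFn_add_one_right (hx : x ≠ 0) (hy : y ≠ 0) :
    x * betaFn x (y + 1) = y * betaFn (x + 1) y := by
  rw [betaFn, betaFn, Gamma_add_one hx, Gamma_add_one hy, show x + 1 + y = x + (y + 1) by ring]
  ring

lemma betaFn_add_one_left_le_Gamma_div_rpow (hx : 0 < x) (hy : 0 < y) :
    betaFn (x + 1) y ≤ Gamma y / x ^ y := by
  rw [betaFn, div_le_div_iff₀ (Gamma_pos_of_pos (by linarith)) (by positivity), mul_right_comm,
    mul_comm (Gamma y)]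
  exact mul_le_mul_of_nonneg_right (Gamma_add_one_mul_rpow_le hx hy) (Gamma_pos_of_pos hy).le

lemma Gamma_div_rpow_le_betaFn (hx : 0 < x) (hy : 0 < y) : Gamma y / (x + y) ^ y ≤ betaFn x y := by
  rw [betaFn, div_le_div_iff₀ (by positivity) (Gamma_pos_of_pos (by linarith)), mul_comm (Gamma x),
    mul_assoc]
  exact mul_le_mul_of_nonneg_left (Gamma_add_le_Gamma_mul_rpow hx hy) (Gamma_pos_of_pos hy).le

lemma tendsto_betaFn_add_natCast (hx : 0 < x) (hy : 0 < y) :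
    Tendsto (fun n : ℕ ↦ betaFn (x + n) y) atTop (𝓝 0) := by
  rw [← tendsto_add_atTop_iff_nat 1]
  have hbound : Tendsto (fun n : ℕ ↦ Gamma y / (x + n) ^ y) atTop (𝓝 0) :=
    tendsto_const_nhds.div_atTop <| (tendsto_rpow_atTop hy).comp <|
      tendsto_atTop_add_const_left _ _ tendsto_natCast_atTop_atTop
  refine squeeze_zero (fun n ↦ (betaFn_pos (by positivity) hy).le) (fun n ↦ ?_) hbound
  rw [Nat.cast_add_one, ← add_assoc]
  exact betaFn_add_one_left_le_Gamma_div_rpow (by positivity) hy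

lemma hasSum_betaFn_add_natCast (hx : 0 < x) (hy : 0 < y) :
    HasSum (fun n : ℕ ↦ betaFn (x + n) (y + 1)) (betaFn x y) := by
  have hpos (n : ℕ) : 0 < x + n := by positivity
  rw [hasSum_iff_tendsto_nat_of_nonneg (fun n ↦ (betaFn_pos (hpos n) (by linarith)).le)]
  have hpartial (n : ℕ) : ∑ i ∈ range n, betaFn (x + i) (y + 1) = betaFn x y - betaFn (x + n) y := by
    have hterm (i : ℕ) : betaFn (x + i) (y + 1) = betaFn (x + i) y - betaFn (x + ↑(i + 1)) y := by
      rw [Nat.cast_add_one, ← add_assoc, ← betaFn_add_one_left_add_betaFn_add_one_right (hpos i) hy]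
      ring
    simpa [hterm] using sum_range_sub' (fun i ↦ betaFn (x + i) y) n
  simpa [hpartial] using tendsto_const_nhds.sub (tendsto_betaFn_add_natCast hx hy)

end Beta

lemma add_one_rpow_le_exp_one_mul_rpow {z ρ : ℝ} (hz : 0 < z) (hρ : 0 ≤ ρ) (hρz : ρ ≤ z) :
    (z + 1) ^ ρ ≤ exp 1 * z ^ ρ := by
  have hbase : z + 1 ≤ z * exp (1 / z) := by
    calc z + 1 = z * (1 / z + 1) := by rw [mul_add, mul_one_div_cancel hz.ne', mul_one, add_comm]
      _ ≤ z * exp (1 / z) := mul_le_mul_of_nonneg_left (add_one_le_exp _) hz.le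
  calc (z + 1) ^ ρ ≤ (z * exp (1 / z)) ^ ρ := rpow_le_rpow (by positivity) hbase hρ
    _ = exp (ρ / z) * z ^ ρ := by
      rw [mul_rpow hz.le (exp_pos _).le, ← exp_mul, one_div_mul_eq_div, mul_comm]
    _ ≤ exp 1 * z ^ ρ := by
      gcongr
      exact div_le_one_of_le₀ hρz hz.le

section YuleSimon

variable {ρ x : ℝ}

lemma hasSum_yuleSimon (hρ : 0 < ρ) : HasSum (fun i : ℕ ↦ ρ * betaFn (i + 1) (ρ + 1)) 1 := by
  have h := (hasSum_betaFn_add_natCast one_pos hρ).mul_left ρ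
  rw [betaFn_one_left hρ, mul_one_div_cancel hρ.ne'] at h
  simpa only [add_comm (1 : ℝ)] using h

lemma antitone_yuleSimon (hρ : 0 < ρ) : Antitone fun i : ℕ ↦ ρ * betaFn (i + 1) (ρ + 1) :=
  antitone_nat_of_succ_le fun n ↦ mul_le_mul_of_nonneg_left
    (by simpa using betaFn_add_one_left_le (by positivity) (by linarith)) hρ.le

lemma hasSum_yuleSimon_tail (hρ : 0 < ρ) (hx : 0 < x) :
    HasSum (fun n : ℕ ↦ ρ * betaFn (x + 1 + n) (ρ + 1)) (x * betaFn x (ρ + 1)) := by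
  rw [mul_betaFn_add_one_right hx.ne' hρ.ne']
  exact (hasSum_betaFn_add_natCast (by linarith) hρ).mul_left ρ

lemma Gamma_div_exp_one_mul_rpow_le_mul_betaFn (hρ : 0 < ρ) (hx : 0 < x) :
    Gamma (ρ + 1) / (exp 1 * (x + ρ) ^ ρ) ≤ x * betaFn x (ρ + 1) := by
  have hρΓ : 0 ≤ ρ * Gamma ρ := by positivity [Gamma_pos_of_pos hρ]
  calc Gamma (ρ + 1) / (exp 1 * (x + ρ) ^ ρ) ≤ ρ * Gamma ρ / (x + 1 + ρ) ^ ρ := by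
        rw [Gamma_add_one hρ.ne', add_right_comm]
        exact div_le_div_of_nonneg_left hρΓ (by positivity)
          (add_one_rpow_le_exp_one_mul_rpow (by linarith) hρ.le (by linarith))
    _ ≤ ρ * betaFn (x + 1) ρ := by
        rw [mul_div_assoc]
        exact mul_le_mul_of_nonneg_left (Gamma_div_rpow_le_betaFn (by linarith) hρ) hρ.le
    _ = x * betaFn x (ρ + 1) := (mul_betaFn_add_one_right hx.ne' hρ.ne').symm

end YuleSimon

lemma Finset.sum_le_sum_range_of_antitone {G : Type*} [AddCommGroup G] [PartialOrder G]
    [IsOrderedAddMonoid G] {t : ℕ → G} (ht : Antitone t) {M : ℕ} (htM : 0 ≤ t M)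
    {S : Finset ℕ} (hS : #S ≤ M) : ∑ i ∈ S, t i ≤ ∑ i ∈ range M, t i := by
  have hcard : #(S \ range M) ≤ #(range M \ S) :=
    card_sdiff_le_card_sdiff_iff.2 (by rwa [card_range])
  have hout : ∑ i ∈ S \ range M, t i ≤ #(S \ range M) • t M :=
    sum_le_card_nsmul _ _ _ fun i hi ↦ ht (by simpa using (mem_sdiff.1 hi).2)
  have hin : #(range M \ S) • t M ≤ ∑ i ∈ range M \ S, t i :=
    card_nsmul_le_sum _ _ _ fun i hi ↦ ht (mem_range.1 (mem_sdiff.1 hi).1).le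
  rw [← sub_nonneg, ← sum_sdiff_sub_sum_sdiff, sub_nonneg]
  exact hout.trans ((nsmul_le_nsmul_left htM hcard).trans hin)

lemma tsum_nat_add_le_tsum_abs_sub {p t : ℕ → ℝ} (ht : Summable t) (ht_anti : Antitone t)
    (ht_nonneg : ∀ i, 0 ≤ t i) {M : ℕ} {S : Finset ℕ} (hS : #S ≤ M) (hp : ∀ i ∉ S, p i = 0) :
    ∑' i, t (i + M) ≤ ∑' i, |p i - t i| := by
  have hsummable : Summable fun i ↦ |p i - t i| :=
    ((summable_of_ne_finset_zero hp).sub ht).abs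
  have hoff : ∑' i : ↑(S : Set ℕ)ᶜ, t i = ∑' i : ↑(S : Set ℕ)ᶜ, |p i - t i| := by
    refine tsum_congr fun i ↦ ?_
    rw [hp i i.2, zero_sub, abs_neg, abs_of_nonneg (ht_nonneg i)]
  calc ∑' i, t (i + M) = ∑' i, t i - ∑ i ∈ range M, t i := by
        rw [← ht.sum_add_tsum_nat_add M, add_sub_cancel_left]
    _ ≤ ∑' i, t i - ∑ i ∈ S, t i :=
        sub_le_sub_left (sum_le_sum_range_of_antitone ht_anti (ht_nonneg M) hS) _
    _ = ∑' i : ↑(S : Set ℕ)ᶜ, |p i - t i| := by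
        rw [← ht.sum_add_tsum_compl (s := S), add_sub_cancel_left, hoff]
    _ ≤ ∑' i, |p i - t i| := hsummable.tsum_subtype_le _ _ fun i ↦ abs_nonneg _

lemma IsMType.exists_card_le {M : ℕ} {p : ℕ → ℝ} (hp : IsMType M p) :
    ∃ S : Finset ℕ, #S ≤ M ∧ ∀ i ∉ S, p i = 0 := by
  obtain ⟨hsum, c, -, hc⟩ := hp
  rcases Nat.eq_zero_or_pos M with rfl | hM
  · have hp0 : p = 0 := funext fun i ↦ by simp [hc]
    exact absurd (hasSum_zero.unique (hp0 ▸ hsum)) zero_ne_one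
  have hM' : (0 : ℝ) < M := Nat.cast_pos.2 hM
  have hp_nonneg (i : ℕ) : 0 ≤ p i := by rw [hc]; positivity
  have hp_large {i : ℕ} (hi : p i ≠ 0) : 1 / (M : ℝ) ≤ p i := by
    rw [hc] at hi ⊢
    have : (1 : ℝ) ≤ c i := Nat.one_le_cast.2 (Nat.pos_of_ne_zero (by rintro h; simp [h] at hi))
    gcongr
  have hfinite : {i | p i ≠ 0}.Finite := by
    have hsmall := hsum.summable.tendsto_cofinite_zero.eventually (gt_mem_nhds (one_div_pos.2 hM'))
    exact (eventually_cofinite.1 hsmall).subset fun i hi ↦ not_lt.2 (hp_large hi)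
  refine ⟨hfinite.toFinset, ?_, fun i hi ↦ by simpa using hi⟩
  have hmass : #hfinite.toFinset • (1 / (M : ℝ)) ≤ 1 :=
    (card_nsmul_le_sum _ _ _ fun i hi ↦ hp_large (hfinite.mem_toFinset.1 hi)).trans
      (sum_le_hasSum _ (fun i _ ↦ hp_nonneg i) hsum)
  rw [nsmul_eq_mul, ← div_eq_mul_one_div, div_le_one hM'] at hmass
  exact_mod_cast hmass

/-- for the Yule–Simon distribution `t_i = ρ B(i, ρ+1)` and every
integer `M ≥ 2`, one has `M B(M, ρ+1) ≥ K(ρ)/(M+ρ)^ρ` with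
`K(ρ) = Γ(ρ+1)/(4√(2(1+ρ)))`; moreover the tail mass equals `T_M = M B(M, ρ+1)` and
every `M`-type distribution `p` satisfies `‖p − t‖₁ ≥ T_M`. -/
theorem stmt11 (ρ : ℝ) (hρ : 0 < ρ) (M : ℕ) (hM : 2 ≤ M) :
    Real.Gamma (ρ + 1) / (4 * Real.sqrt (2 * (1 + ρ))) / ((M : ℝ) + ρ) ^ ρ ≤
      (M : ℝ) * betaFn (M : ℝ) (ρ + 1) ∧
    (∑' i : ℕ, ρ * betaFn ((M : ℝ) + 1 + (i : ℝ)) (ρ + 1)) =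
      (M : ℝ) * betaFn (M : ℝ) (ρ + 1) ∧
    ∀ p : ℕ → ℝ, IsMType M p →
      (M : ℝ) * betaFn (M : ℝ) (ρ + 1) ≤
        ∑' i : ℕ, |p i - ρ * betaFn ((i : ℝ) + 1) (ρ + 1)| := by
  have hM0 : (0 : ℝ) < M := by exact_mod_cast (by omega : 0 < M)
  have htail := hasSum_yuleSimon_tail hρ hM0
  refine ⟨?_, htail.tsum_eq, fun p hp ↦ ?_⟩
  · have hK : exp 1 ≤ 4 * √(2 * (1 + ρ)) := by
      have : 1 ≤ √(2 * (1 + ρ)) := one_le_sqrt.2 (by linarith)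
      linarith [exp_one_lt_d9]
    calc _ = Gamma (ρ + 1) / (4 * √(2 * (1 + ρ)) * (M + ρ) ^ ρ) := div_div _ _ _
      _ ≤ Gamma (ρ + 1) / (exp 1 * (M + ρ) ^ ρ) := by
        have := Gamma_pos_of_pos (by linarith : 0 < ρ + 1)
        gcongr
      _ ≤ _ := Gamma_div_exp_one_mul_rpow_le_mul_betaFn hρ hM0
  · obtain ⟨S, hS, hpS⟩ := hp.exists_card_le
    have hys := hasSum_yuleSimon hρ
    calc (M : ℝ) * betaFn M (ρ + 1) = ∑' i : ℕ, ρ * betaFn (↑(i + M) + 1) (ρ + 1) := by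
          rw [← htail.tsum_eq]
          push_cast
          ring_nf
      _ ≤ _ := tsum_nat_add_le_tsum_abs_sub hys.summable (antitone_yuleSimon hρ)
          (fun i ↦ mul_nonneg hρ.le (betaFn_pos (by positivity) (by linarith)).le) hS hpS
end

section
/- Let t be a target distribution with countably infinite support. For each positive integer M, let p^(M) be any M-type distribution minimizing D(p‖t) over all M-type distributions, and let k(M) be its support size. Then k(M) → ∞ and k(M)/M → 0 as M → ∞. -/
open Classical in
/-- Informational divergence `D(p‖t) = Σ_{i : p_i > 0} p_i log(p_i / t_i)`
(natural log), valued in the extended reals: it is `⊤` if `p` puts mass where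
`t` does not. -/
noncomputable def klE (p t : ℕ → ℝ) : EReal :=
  if ∀ i, 0 < p i → 0 < t i then
    (((∑' i, if 0 < p i then p i * Real.log (p i / t i) else 0 : ℝ) : EReal))
  else ⊤

/-! The optimal divergences tend to zero: rounding `M t_i` down on an initial segment and putting
the remaining mass on the first atom gives `M`-type distributions `q` with `D(q‖t)` as small as we
like. Both limits then follow from the Fenchel-type inequality `λ x - e^(λ-1) t ≤ x log (x / t)`.
Summed with `λ = 1` it gives `t(supp p) ≥ 1 - D(p‖t)`, and since `t` is nonincreasing and has no
last atom, the support must eventually be longer than any fixed `K`. Summed with `λ = 2` on the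
atoms beyond `n` it gives `p(i ≥ n) ≤ D(p‖t) + (e - 1) t(i ≥ n)`; as every atom of an `M`-type
distribution carries mass at least `1/M`, at most `M` times that many atoms lie beyond `n`. -/

open Real Filter Finset Topology

noncomputable def klReal (p t : ℕ → ℝ) : ℝ :=
  ∑' i, if 0 < p i then p i * log (p i / t i) else 0

lemma klE_eq_klReal {p t : ℕ → ℝ} (ht : ∀ i, 0 < t i) : klE p t = klReal p t := by
  unfold klE
  rw [if_pos fun i _ => ht i]
  rfl

lemma klReal_eq_sum {p t : ℕ → ℝ} {S : Finset ℕ} (hp : ∀ i, 0 ≤ p i) (hS : ∀ i ∉ S, p i = 0) :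
    klReal p t = ∑ i ∈ S, p i * log (p i / t i) := by
  rw [klReal, tsum_eq_sum fun i hi => by simp [hS i hi]]
  refine sum_congr rfl fun i _ => ?_
  rcases (hp i).lt_or_eq with h | h
  · simp [h]
  · simp [← h]

lemma mul_sub_exp_mul_le_mul_log_div {x t : ℝ} (hx : 0 ≤ x) (ht : 0 < t) (l : ℝ) :
    l * x - exp (l - 1) * t ≤ x * log (x / t) := by
  rcases hx.lt_or_eq with hx | rfl
  · have h := log_le_sub_one_of_pos (show 0 < exp (l - 1) * t / x by positivity)
    rw [log_div (by positivity) hx.ne', log_mul (exp_pos _).ne' ht.ne', log_exp] at h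
    have h' := mul_le_mul_of_nonneg_left h hx.le
    have hcancel : x * (exp (l - 1) * t / x - 1) = exp (l - 1) * t - x := by field_simp
    rw [log_div hx.ne' ht.ne']
    linarith
  · simp only [mul_zero, zero_mul, zero_div, sub_nonpos]
    positivity

lemma mul_log_div_le {x t : ℝ} (hx : 0 ≤ x) (ht : 0 < t) : x * log (x / t) ≤ x * (x - t) / t := by
  rcases hx.lt_or_eq with hx | rfl
  · calc x * log (x / t) ≤ x * (x / t - 1) :=
          mul_le_mul_of_nonneg_left (log_le_sub_one_of_pos (by positivity)) hx.le
      _ = x * (x - t) / t := by field_simp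
  · simp

lemma Antitone.sum_le_sum_range_card {f : ℕ → ℝ} (hf : Antitone f) (S : Finset ℕ) :
    ∑ i ∈ S, f i ≤ ∑ i ∈ range #S, f i := by
  -- the atoms of `S` beyond `#S` are no heavier than the missing ones below `#S`
  have hcard : #(S \ range #S) = #(range #S \ S) := card_sdiff_comm (card_range _).symm
  have hhigh : ∑ i ∈ S \ range #S, f i ≤ #(S \ range #S) • f #S :=
    sum_le_card_nsmul _ _ _ fun i hi => hf (by simpa using (mem_sdiff.1 hi).2)
  have hlow : #(range #S \ S) • f #S ≤ ∑ i ∈ range #S \ S, f i :=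
    card_nsmul_le_sum _ _ _ fun i hi => hf (mem_range.1 (mem_sdiff.1 hi).1).le
  rw [← sum_inter_add_sum_sdiff S (range #S), ← sum_inter_add_sum_sdiff (range #S) S, inter_comm]
  rw [hcard] at hhigh
  linarith

section FiniteSupport

variable {p t : ℕ → ℝ} {S : Finset ℕ}

lemma one_sub_klReal_le_sum (ht : ∀ i, 0 < t i) (hp : ∀ i, 0 ≤ p i) (hS : ∀ i ∉ S, p i = 0)
    (hS1 : ∑ i ∈ S, p i = 1) : 1 - klReal p t ≤ ∑ i ∈ S, t i := by
  have h := sum_le_sum fun i (_ : i ∈ S) => mul_sub_exp_mul_le_mul_log_div (hp i) (ht i) 1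
  simp only [one_mul, sub_self, exp_zero, sum_sub_distrib, hS1] at h
  rw [klReal_eq_sum hp hS]
  linarith

lemma sum_le_klReal_add {A : Finset ℕ} (ht : ∀ i, 0 < t i) (htS : ∑ i ∈ S, t i ≤ 1)
    (hp : ∀ i, 0 ≤ p i) (hS : ∀ i ∉ S, p i = 0) (hS1 : ∑ i ∈ S, p i = 1) (hA : A ⊆ S) :
    ∑ i ∈ A, p i ≤ klReal p t + (exp 1 - 1) * ∑ i ∈ A, t i := by
  have hrest := sum_le_sum fun i (_ : i ∈ S \ A) => mul_sub_exp_mul_le_mul_log_div (hp i) (ht i) 1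
  have htail := sum_le_sum fun i (_ : i ∈ A) => mul_sub_exp_mul_le_mul_log_div (hp i) (ht i) 2
  simp only [sum_sub_distrib, ← mul_sum] at hrest htail
  rw [← sum_sdiff hA] at hS1 htS
  rw [klReal_eq_sum hp hS, ← sum_sdiff hA]
  norm_num at hrest htail
  linarith

end FiniteSupport

namespace IsMType

variable {M : ℕ} {p t : ℕ → ℝ}

lemma nonneg_s13 (h : IsMType M p) (i : ℕ) : 0 ≤ p i := by
  obtain ⟨-, c, -, hc⟩ := h
  rw [hc i]
  positivity

lemma le_one (h : IsMType M p) (i : ℕ) : p i ≤ 1 :=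
  le_hasSum h.1 i fun j _ => h.nonneg_s13 j

lemma pos (h : IsMType M p) : 0 < M := by
  obtain ⟨h1, c, -, hc⟩ := h
  refine Nat.pos_of_ne_zero fun hM => ?_
  have hp0 : p = 0 := funext fun i => by simp [hc i, hM]
  rw [hp0] at h1
  exact one_ne_zero (hasSum_zero.unique h1).symm

lemma inv_le_of_pos (h : IsMType M p) {i : ℕ} (hi : 0 < p i) : (M : ℝ)⁻¹ ≤ p i := by
  obtain ⟨-, c, -, hc⟩ := h
  rw [hc i] at hi ⊢
  have hc1 : (1 : ℝ) ≤ c i := by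
    exact_mod_cast Nat.one_le_iff_ne_zero.2 fun h0 => by simp [h0] at hi
  rw [div_eq_mul_inv]
  exact le_mul_of_one_le_left (by positivity) hc1

lemma finite_support_s13 (h : IsMType M p) : {i | 0 < p i}.Finite := by
  have hM : (0 : ℝ) < (M : ℝ)⁻¹ := by have := h.pos; positivity
  have hsmall := h.1.summable.tendsto_cofinite_zero.eventually (gt_mem_nhds hM)
  exact (eventually_cofinite.1 hsmall).subset fun i hi => not_lt.2 (h.inv_le_of_pos hi)

lemma exists_finset (h : IsMType M p) :
    ∃ S : Finset ℕ, Nat.card {i | 0 < p i} = #S ∧ (∀ i ∈ S, 0 < p i) ∧ (∀ i ∉ S, p i = 0) ∧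
      ∑ i ∈ S, p i = 1 := by
  have hout : ∀ i ∉ h.finite_support_s13.toFinset, p i = 0 := fun i hi =>
    le_antisymm (not_lt.1 (by simpa using hi)) (h.nonneg_s13 i)
  exact ⟨_, Nat.card_eq_card_finite_toFinset _, fun i hi => by simpa using hi, hout,
    (h.1.unique (hasSum_sum_of_ne_finset_zero hout)).symm⟩

lemma card_div_le_sum (h : IsMType M p) {A : Finset ℕ} (hA : ∀ i ∈ A, 0 < p i) :
    (#A : ℝ) / M ≤ ∑ i ∈ A, p i := by
  simpa [nsmul_eq_mul, div_eq_mul_inv] using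
    card_nsmul_le_sum A p _ fun i hi => h.inv_le_of_pos (hA i hi)

lemma one_sub_klReal_le_sum_range (ht : ∀ i, 0 < t i) (hanti : Antitone t) (h : IsMType M p) :
    1 - klReal p t ≤ ∑ i ∈ range (Nat.card {i | 0 < p i}), t i := by
  obtain ⟨S, hcard, -, hout, hS1⟩ := h.exists_finset
  rw [hcard]
  exact (one_sub_klReal_le_sum ht h.nonneg_s13 hout hS1).trans (hanti.sum_le_sum_range_card S)

lemma card_support_div_le (ht : ∀ i, 0 < t i) (ht1 : HasSum t 1) (h : IsMType M p) (n : ℕ) :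
    (Nat.card {i | 0 < p i} : ℝ) / M ≤
      n / M + klReal p t + (exp 1 - 1) * (1 - ∑ i ∈ range n, t i) := by
  obtain ⟨S, hcard, hpos, hout, hS1⟩ := h.exists_finset
  set A := S.filter fun i => n ≤ i
  have hcardS : (#S : ℝ) ≤ n + #A := by
    have : S ⊆ range n ∪ A := fun i hi => by
      by_cases hin : n ≤ i <;> simp [A, hi, hin, not_le.1]
    exact_mod_cast (card_le_card this).trans ((card_union_le _ _).trans (by simp))
  have hcardA := h.card_div_le_sum (A := A) fun i hi => hpos i (mem_filter.1 hi).1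
  have hmassA := sum_le_klReal_add ht (sum_le_hasSum S (fun i _ => (ht i).le) ht1) h.nonneg_s13 hout
    hS1 (filter_subset (fun i => n ≤ i) S)
  have htailA : ∑ i ∈ A, t i ≤ 1 - ∑ i ∈ range n, t i := by
    have hdisj : Disjoint (range n) A := disjoint_left.2 fun i hi hiA => by
      have := (mem_filter.1 hiA).2
      simp at hi
      omega
    have := sum_le_hasSum (range n ∪ A) (fun i _ => (ht i).le) ht1
    rw [sum_union hdisj] at this
    linarith
  have he : 0 ≤ exp 1 - 1 := by linarith [add_one_le_exp 1]
  calc (Nat.card {i | 0 < p i} : ℝ) / M ≤ (n + #A) / M := by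
        rw [hcard]
        gcongr
    _ = n / M + #A / M := add_div _ _ _
    _ ≤ n / M + klReal p t + (exp 1 - 1) * ∑ i ∈ A, t i := by linarith
    _ ≤ n / M + klReal p t + (exp 1 - 1) * (1 - ∑ i ∈ range n, t i) := by gcongr

end IsMType

lemma isMType_of_sum_eq {M : ℕ} (hM : 0 < M) {c : ℕ → ℕ} {S : Finset ℕ} (hc : ∀ i ∉ S, c i = 0)
    (hS : ∑ i ∈ S, c i = M) : IsMType M fun i => (c i : ℝ) / M := by
  refine ⟨?_, c, fun i => ?_, fun i => rfl⟩
  · have hM' : (M : ℝ) ≠ 0 := by exact_mod_cast hM.ne'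
    have h := hasSum_sum_of_ne_finset_zero (f := fun i => (c i : ℝ) / M)
      (L := SummationFilter.unconditional ℕ) (s := S) fun i hi => by simp [hc i hi]
    rwa [← sum_div, ← Nat.cast_sum, hS, div_self hM'] at h
  · by_cases hi : i ∈ S
    · exact hS ▸ single_le_sum (fun _ _ => Nat.zero_le _) hi
    · simp [hc i hi]

lemma IsMType.klReal_le {M : ℕ} {q t : ℕ → ℝ} (ht : ∀ i, 0 < t i) (hq : IsMType M q) {j : ℕ}
    (hle : ∀ i ≠ j, q i ≤ t i) (hj : t j ≤ q j) : klReal q t ≤ (q j - t j) / t j := by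
  obtain ⟨S, -, -, hout, -⟩ := hq.exists_finset
  have hout' : ∀ i ∉ insert j S, q i = 0 := fun i hi => hout i fun h => hi (mem_insert_of_mem h)
  rw [klReal_eq_sum hq.nonneg_s13 hout', ← sum_ite_eq_of_mem' (insert j S) j
    (fun _ => (q j - t j) / t j) (mem_insert_self j S)]
  refine sum_le_sum fun i _ => (mul_log_div_le (hq.nonneg_s13 i) (ht i)).trans ?_
  split_ifs with hij
  · subst hij
    rw [mul_div_assoc]
    exact mul_le_of_le_one_left (div_nonneg (sub_nonneg.2 hj) (ht i).le) (hq.le_one i)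
  · exact div_nonpos_of_nonpos_of_nonneg
      (mul_nonpos_of_nonneg_of_nonpos (hq.nonneg_s13 i) (sub_nonpos.2 (hle i hij))) (ht i).le

noncomputable def floorCounts (t : ℕ → ℝ) (M n : ℕ) : ℕ → ℕ
  | 0 => M - ∑ j ∈ range n, ⌊M * t (j + 1)⌋₊
  | i + 1 => if i < n then ⌊M * t (i + 1)⌋₊ else 0

lemma exists_isMType_approx {t : ℕ → ℝ} (ht : ∀ i, 0 < t i) (ht1 : HasSum t 1) {M : ℕ}
    (hM : 0 < M) (n : ℕ) :
    ∃ q, IsMType M q ∧ (∀ i ≠ 0, q i ≤ t i) ∧ t 0 ≤ q 0 ∧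
      q 0 - t 0 ≤ 1 - ∑ i ∈ range (n + 1), t i + n / M := by
  have hM' : (0 : ℝ) < M := by exact_mod_cast hM
  set R := ∑ j ∈ range n, t (j + 1)
  set F := ∑ j ∈ range n, (⌊M * t (j + 1)⌋₊ : ℝ)
  have hsum : ∑ i ∈ range (n + 1), t i = R + t 0 := sum_range_succ' _ _
  have hsum_le : R + t 0 ≤ 1 := hsum ▸ sum_le_hasSum _ (fun i _ => (ht i).le) ht1
  have hF_le : F ≤ M * R := by
    rw [mul_sum]
    exact sum_le_sum fun j _ => Nat.floor_le (by have := ht (j + 1); positivity)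
  have hF_ge : M * R - n ≤ F := by
    have := sum_le_sum fun j (_ : j ∈ range n) => (Nat.sub_one_lt_floor (M * t (j + 1))).le
    rw [sum_sub_distrib, ← mul_sum] at this
    simpa using this
  have hFM : ∑ j ∈ range n, ⌊M * t (j + 1)⌋₊ ≤ M := by
    have : F ≤ M := hF_le.trans (by nlinarith [ht 0])
    rwa [← Nat.cast_le (α := ℝ), Nat.cast_sum]
  have hcounts : ∑ i ∈ range (n + 1), floorCounts t M n i = M := by
    rw [sum_range_succ']
    simp only [floorCounts]
    rw [sum_congr rfl fun j hj => if_pos (mem_range.1 hj)]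
    omega
  have hzero : ∀ i ∉ range (n + 1), floorCounts t M n i = 0 := by
    rintro (_ | i) hi <;> simp_all [floorCounts]
  have hq0 : ((floorCounts t M n 0 : ℕ) : ℝ) / M = 1 - F / M := by
    rw [floorCounts, Nat.cast_sub hFM, Nat.cast_sum, sub_div, div_self hM'.ne']
  refine ⟨_, isMType_of_sum_eq hM hzero hcounts, ?_, ?_, ?_⟩
  · rintro (_ | i) hi
    · exact absurd rfl hi
    · simp only [floorCounts]
      split_ifs
      · exact div_le_of_le_mul₀ hM'.le (ht _).le (by rw [mul_comm]; exact Nat.floor_le (by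
          have := ht (i + 1); positivity))
      · simpa using (ht _).le
  · rw [hq0, le_sub_comm, div_le_iff₀ hM']
    nlinarith
  · have hF_div : R - n / M ≤ F / M := by
      rw [le_div_iff₀ hM', sub_mul, div_mul_cancel₀ _ hM'.ne']
      linarith
    rw [hq0, hsum]
    linarith

lemma eventually_exists_isMType_klReal_le {t : ℕ → ℝ} (ht : ∀ i, 0 < t i) (ht1 : HasSum t 1)
    {ε : ℝ} (hε : 0 < ε) : ∀ᶠ M in atTop, ∃ q, IsMType M q ∧ klReal q t ≤ ε := by
  have hε' : 0 < ε * t 0 / 2 := by have := ht 0; positivity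
  obtain ⟨n, hn⟩ := eventually_atTop.1 (ht1.tendsto_sum_nat.eventually
    (lt_mem_nhds (show 1 - ε * t 0 / 2 < 1 by linarith)))
  filter_upwards [eventually_gt_atTop 0,
    (tendsto_const_div_atTop_nhds_zero_nat (n : ℝ)).eventually (gt_mem_nhds hε')] with M hM hnM
  obtain ⟨q, hq, hle, h0, herr⟩ := exists_isMType_approx ht ht1 hM n
  refine ⟨q, hq, (hq.klReal_le ht hle h0).trans ?_⟩
  rw [div_le_iff₀ (ht 0)]
  linarith [hn (n + 1) (by omega)]

lemma tendsto_card_support_atTop {t : ℕ → ℝ} (ht : ∀ i, 0 < t i) (hanti : Antitone t)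
    (ht1 : HasSum t 1) {p : ℕ → ℕ → ℝ} (hp : ∀ᶠ M in atTop, IsMType M (p M))
    (hkl : ∀ ε > 0, ∀ᶠ M in atTop, klReal (p M) t ≤ ε) :
    Tendsto (fun M => Nat.card {i | 0 < p M i}) atTop atTop := by
  refine tendsto_atTop.2 fun K => ?_
  have hK : ∑ i ∈ range K, t i < 1 := by
    have := sum_le_hasSum (range (K + 1)) (fun i _ => (ht i).le) ht1
    rw [sum_range_succ] at this
    linarith [ht K]
  filter_upwards [hp, hkl ((1 - ∑ i ∈ range K, t i) / 2) (by linarith)] with M hpM hklM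
  by_contra! hlt
  have hmono : ∑ i ∈ range (Nat.card {i | 0 < p M i}), t i ≤ ∑ i ∈ range K, t i :=
    sum_le_sum_of_subset_of_nonneg (range_subset_range.2 hlt.le) fun i _ _ => (ht i).le
  linarith [hpM.one_sub_klReal_le_sum_range ht hanti]

lemma tendsto_card_support_div_atTop {t : ℕ → ℝ} (ht : ∀ i, 0 < t i) (ht1 : HasSum t 1)
    {p : ℕ → ℕ → ℝ} (hp : ∀ᶠ M in atTop, IsMType M (p M))
    (hkl : ∀ ε > 0, ∀ᶠ M in atTop, klReal (p M) t ≤ ε) :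
    Tendsto (fun M => (Nat.card {i | 0 < p M i} : ℝ) / M) atTop (𝓝 0) := by
  refine tendsto_order.2 ⟨fun a ha => Eventually.of_forall fun M => ha.trans_le (by positivity),
    fun ε hε => ?_⟩
  have htail : Tendsto (fun n => (exp 1 - 1) * (1 - ∑ i ∈ range n, t i)) atTop (𝓝 0) := by
    simpa using ((tendsto_const_nhds (x := (1 : ℝ))).sub ht1.tendsto_sum_nat).const_mul (exp 1 - 1)
  have hε3 : 0 < ε / 3 := by positivity
  obtain ⟨n, hn⟩ := (htail.eventually (gt_mem_nhds hε3)).exists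
  filter_upwards [hp, hkl (ε / 3) hε3,
    (tendsto_const_div_atTop_nhds_zero_nat (n : ℝ)).eventually (gt_mem_nhds hε3)]
    with M hpM hklM hnM
  linarith [hpM.card_support_div_le ht ht1 n]

/-- for a target distribution with countably infinite support, the
support sizes `k(M)` of any informational-divergence optimal `M`-type
approximations `p M` satisfy `k(M) → ∞` and `k(M)/M → 0` as `M → ∞`. -/
theorem stmt13 (t : ℕ → ℝ) (ht : IsTargetDist t) (hpos : ∀ i, 0 < t i)
    (p : ℕ → ℕ → ℝ)
    (hp : ∀ M, 0 < M → IsMType M (p M) ∧ ∀ q, IsMType M q → klE (p M) t ≤ klE q t) :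
    Filter.Tendsto (fun M => Nat.card {i | 0 < p M i}) Filter.atTop Filter.atTop ∧
    Filter.Tendsto (fun M => (Nat.card {i | 0 < p M i} : ℝ) / (M : ℝ))
      Filter.atTop (nhds 0) := by
  obtain ⟨-, hanti, ht1⟩ := ht
  have hpM : ∀ᶠ M in atTop, IsMType M (p M) :=
    (eventually_gt_atTop 0).mono fun M hM => (hp M hM).1
  have hkl : ∀ ε > 0, ∀ᶠ M in atTop, klReal (p M) t ≤ ε := by
    intro ε hε
    filter_upwards [eventually_exists_isMType_klReal_le hpos ht1 hε, eventually_gt_atTop 0]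
      with M ⟨q, hq, hqε⟩ hM
    have hopt := (hp M hM).2 q hq
    rw [klE_eq_klReal hpos, klE_eq_klReal hpos, EReal.coe_le_coe_iff] at hopt
    exact hopt.trans hqε
  exact ⟨tendsto_card_support_atTop hpos (antitone_nat_of_succ_le hanti) ht1 hpM hkl,
    tendsto_card_support_div_atTop hpos ht1 hpM hkl⟩
end

section
/- Let t be a target distribution with finite or countably infinite support and let M be a positive integer. If p is an M-type distribution minimizing D(q‖t) over all M-type distributions q, then for all indices i, j: t_j < t_i and p_i = 0 imply p_j = 0. -/
/-- any informational-divergence optimal `M`-type approximation `p`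
of a target distribution `t` satisfies: `t_j < t_i` and `p_i = 0` imply `p_j = 0`. -/
theorem stmt15 (t : ℕ → ℝ) (ht : IsTargetDist t) (M : ℕ) (hM : 0 < M)
    (p : ℕ → ℝ) (hp : IsMType M p)
    (hopt : ∀ q, IsMType M q → klE p t ≤ klE q t) :
    ∀ i j, t j < t i → p i = 0 → p j = 0 := by
  classical
  obtain ⟨ht0, htmono, htsum⟩ := ht
  obtain ⟨hpsum, c, hcle, hpc⟩ := hp
  have hMR : (0:ℝ) < M := by positivity
  have hpnn : ∀ k, 0 ≤ p k := fun k => by rw [hpc k]; positivity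
  -- t 0 > 0
  have htle : ∀ k, t k ≤ t 0 := by
    intro k
    induction k with
    | zero => exact le_refl _
    | succ n ih => exact (htmono n).trans ih
  have ht0pos : 0 < t 0 := by
    by_contra h
    push_neg at h
    have hzero : t = fun _ => (0:ℝ) := by
      funext k
      exact le_antisymm ((htle k).trans h) (ht0 k)
    have : (1:ℝ) = 0 := htsum.unique (by rw [hzero]; exact hasSum_zero)
    norm_num at this
  -- the all-mass-at-0 distribution
  have hq0 : IsMType M (fun k => if k = 0 then (1:ℝ) else 0) := by
    refine ⟨hasSum_ite_eq 0 1, fun k => if k = 0 then M else 0, ?_, ?_⟩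
    · intro k; dsimp only; split <;> omega
    · intro k
      by_cases hk : k = 0 <;> simp [hk, div_self (ne_of_gt hMR)]
  have hq0cond : ∀ k, 0 < (if k = 0 then (1:ℝ) else 0) → 0 < t k := by
    intro k hk
    by_cases h : k = 0
    · rw [h]; exact ht0pos
    · simp [h] at hk
  -- klE p t is not ⊤, hence the positivity condition holds for p
  have hpcond : ∀ k, 0 < p k → 0 < t k := by
    by_contra hc
    have h1 : klE p t = ⊤ := by rw [klE, if_neg hc]
    have h2 := hopt _ hq0
    rw [h1, top_le_iff, klE, if_pos hq0cond] at h2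
    exact EReal.coe_ne_top _ h2
  intro i j htji hpi
  by_contra hpj0
  have hpj : 0 < p j := lt_of_le_of_ne (hpnn j) (Ne.symm hpj0)
  have htj : 0 < t j := hpcond j hpj
  have hti : 0 < t i := htj.trans htji
  have hij : i ≠ j := fun h => by rw [h] at htji; exact lt_irrefl _ htji
  -- the swapped distribution
  set q : ℕ → ℝ := fun k => p (Equiv.swap i j k) with hq_def
  have hqi : q i = p j := by simp [hq_def, Equiv.swap_apply_left]
  have hqj : q j = p i := by simp [hq_def, Equiv.swap_apply_right]
  have hqk : ∀ k, k ≠ i → k ≠ j → q k = p k := by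
    intro k h1 h2
    simp [hq_def, Equiv.swap_apply_of_ne_of_ne h1 h2]
  have hqM : IsMType M q := by
    refine ⟨(Equiv.swap i j).hasSum_iff.2 hpsum, fun k => c (Equiv.swap i j k),
      fun k => hcle _, fun k => hpc _⟩
  have hqcond : ∀ k, 0 < q k → 0 < t k := by
    intro k hk
    by_cases h1 : k = i
    · rw [h1]; exact hti
    · by_cases h2 : k = j
      · rw [h2] at hk; rw [hqj, hpi] at hk; exact absurd hk (lt_irrefl 0)
      · rw [hqk k h1 h2] at hk; exact hpcond k hk
  -- finite support of p
  have hfin : (Function.support p).Finite := by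
    have hev : ∀ᶠ k in Filter.cofinite, p k < 1 / M :=
      hpsum.summable.tendsto_cofinite_zero.eventually (gt_mem_nhds (by positivity))
    refine (Filter.eventually_cofinite.mp hev).subset ?_
    intro k hk
    simp only [Set.mem_setOf_eq, not_lt]
    have hck : 1 ≤ c k := by
      rcases Nat.eq_zero_or_pos (c k) with h | h
      · exfalso; apply hk; rw [hpc k, h]; simp
      · exact h
    rw [hpc k]
    apply (div_le_div_iff_of_pos_right hMR).mpr
    exact_mod_cast hck
  set fp : ℕ → ℝ := fun k => if 0 < p k then p k * Real.log (p k / t k) else 0 with hfp_def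
  set fq : ℕ → ℝ := fun k => if 0 < q k then q k * Real.log (q k / t k) else 0 with hfq_def
  have hfp_sum : Summable fp := by
    apply summable_of_ne_finset_zero (s := hfin.toFinset)
    intro k hk
    have : p k = 0 := by
      by_contra h; exact hk (hfin.mem_toFinset.mpr h)
    simp [hfp_def, this]
  have hfq_sum : Summable fq := by
    apply summable_of_ne_finset_zero (s := insert i hfin.toFinset)
    intro k hk
    have hki : k ≠ i := fun h => hk (by rw [h]; exact Finset.mem_insert_self _ _)
    have hkp : p k = 0 := by
      by_contra h
      exact hk (Finset.mem_insert_of_mem (hfin.mem_toFinset.mpr h))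
    have : q k = 0 := by
      by_cases h2 : k = j
      · rw [h2, hqj]; exact hpi
      · rw [hqk k hki h2]; exact hkp
    simp [hfq_def, this]
  -- the difference of the divergences
  have hfpi : fp i = 0 := by simp [hfp_def, hpi]
  have hfqj : fq j = 0 := by simp [hfq_def, hqj, hpi]
  have hfqi : fq i = p j * Real.log (p j / t i) := by
    simp [hfq_def, hqi, hpj]
  have hfpj : fp j = p j * Real.log (p j / t j) := by
    simp [hfp_def, hpj]
  have hdiff : (∑' k, fq k) - (∑' k, fp k) = p j * (Real.log (t j) - Real.log (t i)) := by
    rw [← Summable.tsum_sub hfq_sum hfp_sum]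
    have hsum : (∑' k, (fq k - fp k)) = ∑ k ∈ ({i, j} : Finset ℕ), (fq k - fp k) := by
      apply tsum_eq_sum
      intro k hk
      simp only [Finset.mem_insert, Finset.mem_singleton, not_or] at hk
      rw [hfq_def, hfp_def]
      simp only [hqk k hk.1 hk.2, sub_self]
    rw [hsum, Finset.sum_pair hij, hfqi, hfpi, hfqj, hfpj]
    rw [Real.log_div (ne_of_gt hpj) (ne_of_gt hti), Real.log_div (ne_of_gt hpj) (ne_of_gt htj)]
    ring
  have hneg : (∑' k, fq k) - (∑' k, fp k) < 0 := by
    rw [hdiff]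
    exact mul_neg_of_pos_of_neg hpj (sub_neg.mpr (Real.log_lt_log htj htji))
  have hlt : (∑' k, fq k) < (∑' k, fp k) := by linarith
  have h2 := hopt q hqM
  rw [klE, if_pos hpcond, klE, if_pos hqcond] at h2
  have : (∑' k, fp k) ≤ (∑' k, fq k) := by exact_mod_cast h2
  linarith
end

section
/- Let t = (t_1, …, t_n) be a probability distribution with t_i > 0 for all i, let M be a positive integer, and call a vector c = (c_1, …, c_n) of nonnegative integers an allocation if Σ_i c_i = M; the cost of an allocation is F(c) = Σ_{i : c_i > 0} c_i log(c_i / t_i). Suppose c* is an optimal allocation (F(c*) ≤ F(c) for every allocation c), and suppose c is a vector of nonnegative integers with Σ_i c_i < M and c_i ≤ c*_i for all i. Let j be an index minimizing Δ_i(c_i + 1) over i = 1, …, n, where Δ_i(k) = k log k − (k−1) log(k−1) + log(1/t_i). Then there exists an optimal allocation c̃ with c_j + 1 ≤ c̃_j and c_i ≤ c̃_i for all i. -/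
/-- The increment function `Δ_i(k) = k log k − (k−1) log(k−1) + log(1/t_i)`
(natural logarithm; in Mathlib `Real.log 0 = 0`, realizing the convention
`0 log 0 = 0`). -/
noncomputable def incr (ti : ℝ) (k : ℕ) : ℝ :=
  (k : ℝ) * Real.log (k : ℝ) - ((k : ℝ) - 1) * Real.log ((k : ℝ) - 1) +
    Real.log (1 / ti)

/-- The cost `F(c) = Σ_{i : c_i > 0} c_i log(c_i / t_i)` of an allocation `c`
(the term vanishes automatically when `c_i = 0`). -/
noncomputable def allocCost {n : ℕ} (t : Fin n → ℝ) (c : Fin n → ℕ) : ℝ :=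
  ∑ i, (c i : ℝ) * Real.log ((c i : ℝ) / t i)

lemma step_lem (ti : ℝ) (hti : 0 < ti) (k : ℕ) :
    (((k+1) : ℕ) : ℝ) * Real.log ((((k+1):ℕ) : ℝ) / ti)
      = (k : ℝ) * Real.log ((k : ℝ) / ti) + incr ti (k+1) := by
  unfold incr
  push_cast
  rcases Nat.eq_zero_or_pos k with hk | hk
  · subst hk; simp
  · have hk0 : (k:ℝ) ≠ 0 := by positivity
    have hk1 : (k:ℝ) + 1 ≠ 0 := by positivity
    rw [Real.log_div hk1 (ne_of_gt hti), Real.log_div hk0 (ne_of_gt hti),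
      one_div, Real.log_inv]
    ring_nf

lemma g_mono : Monotone (fun k : ℕ =>
    ((k:ℝ)+1) * Real.log ((k:ℝ)+1) - (k:ℝ) * Real.log (k:ℝ)) := by
  apply monotone_nat_of_le_succ
  intro k
  have hc := Real.convexOn_mul_log.2 (Set.mem_Ici.mpr (by positivity : (0:ℝ) ≤ (k:ℝ)))
    (Set.mem_Ici.mpr (by positivity : (0:ℝ) ≤ (k:ℝ)+2))
    (show (0:ℝ) ≤ 1/2 by norm_num) (show (0:ℝ) ≤ 1/2 by norm_num)
    (show (1:ℝ)/2 + 1/2 = 1 by norm_num)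
  simp only [smul_eq_mul] at hc
  rw [show (1/2:ℝ)*(k:ℝ) + 1/2*((k:ℝ)+2) = (k:ℝ)+1 from by ring] at hc
  push_cast
  rw [show ((k:ℝ)+1+1) = (k:ℝ)+2 from by ring]
  linarith

lemma incr_mono (ti : ℝ) {a b : ℕ} (h : a ≤ b) : incr ti (a+1) ≤ incr ti (b+1) := by
  have hg := g_mono h
  unfold incr
  push_cast
  simp only [add_sub_cancel_right] at *
  linarith

lemma sum_split {β : Type*} [AddCommMonoid β] {n : ℕ} (j i₀ : Fin n) (h : j ≠ i₀)
    (f : Fin n → β) :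
    ∑ i, f i = f j + f i₀ + ∑ i ∈ Finset.univ \ {j, i₀}, f i := by
  rw [← Finset.sum_sdiff (Finset.subset_univ {j, i₀}), Finset.sum_pair h]
  abel

/-- if `c*` is an optimal allocation of `M` masses, `c` is a
pre-allocation with `Σ_i c_i < M` and `c ≤ c*` entrywise, and `j` minimizes the
increment `Δ_i(c_i + 1)`, then there is an optimal allocation `c̃` with
`c_j + 1 ≤ c̃_j` and `c ≤ c̃` entrywise. -/
theorem stmt16 (n : ℕ) (t : Fin n → ℝ) (hpos : ∀ i, 0 < t i)
    (hsum : ∑ i, t i = 1) (M : ℕ) (hM : 0 < M)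
    (cOpt : Fin n → ℕ) (hcOptSum : ∑ i, cOpt i = M)
    (hcOptMin : ∀ c : Fin n → ℕ, ∑ i, c i = M → allocCost t cOpt ≤ allocCost t c)
    (c : Fin n → ℕ) (hclt : ∑ i, c i < M) (hcle : ∀ i, c i ≤ cOpt i)
    (j : Fin n) (hj : ∀ i, incr (t j) (c j + 1) ≤ incr (t i) (c i + 1)) :
    ∃ cT : Fin n → ℕ, ∑ i, cT i = M ∧
      (∀ c' : Fin n → ℕ, ∑ i, c' i = M → allocCost t cT ≤ allocCost t c') ∧
      c j + 1 ≤ cT j ∧ ∀ i, c i ≤ cT i := by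
  by_cases hcase : c j + 1 ≤ cOpt j
  · exact ⟨cOpt, hcOptSum, hcOptMin, hcase, hcle⟩
  have hcj : cOpt j = c j := le_antisymm (by omega) (hcle j)
  -- find a slack index
  have hex : ∃ i, c i < cOpt i := by
    by_contra h
    push_neg at h
    have := Finset.sum_le_sum (fun i (_ : i ∈ Finset.univ) => h i)
    omega
  obtain ⟨i₀, hi₀⟩ := hex
  have hne : j ≠ i₀ := by
    intro he; rw [← he, hcj] at hi₀; omega
  have hi₀pos : 1 ≤ cOpt i₀ := by omega
  set cT : Fin n → ℕ := fun i => if i = j then cOpt j + 1 else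
    if i = i₀ then cOpt i₀ - 1 else cOpt i with hcT
  have hTj : cT j = cOpt j + 1 := by simp [hcT]
  have hTi₀ : cT i₀ = cOpt i₀ - 1 := by simp [hcT, Ne.symm hne]
  have hToff : ∀ i, i ≠ j → i ≠ i₀ → cT i = cOpt i := by
    intro i h1 h2; simp [hcT, h1, h2]
  have hrestN : ∑ i ∈ Finset.univ \ {j, i₀}, cT i = ∑ i ∈ Finset.univ \ {j, i₀}, cOpt i := by
    refine Finset.sum_congr rfl ?_
    intro i hi
    simp only [Finset.mem_sdiff, Finset.mem_insert, Finset.mem_singleton] at hi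
    rw [hToff i (fun h => hi.2 (Or.inl h)) (fun h => hi.2 (Or.inr h))]
  -- sum
  have hTsum : ∑ i, cT i = M := by
    rw [sum_split j i₀ hne cT, hrestN, hTj, hTi₀]
    rw [sum_split j i₀ hne cOpt] at hcOptSum
    omega
  -- cost comparison
  have hcost : allocCost t cT ≤ allocCost t cOpt := by
    unfold allocCost
    rw [sum_split j i₀ hne (fun i => (cT i : ℝ) * Real.log ((cT i : ℝ) / t i)),
        sum_split j i₀ hne (fun i => (cOpt i : ℝ) * Real.log ((cOpt i : ℝ) / t i))]
    have hRest : ∑ i ∈ Finset.univ \ {j, i₀}, (cT i : ℝ) * Real.log ((cT i : ℝ) / t i)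
        = ∑ i ∈ Finset.univ \ {j, i₀}, (cOpt i : ℝ) * Real.log ((cOpt i : ℝ) / t i) := by
      refine Finset.sum_congr rfl ?_
      intro i hi
      simp only [Finset.mem_sdiff, Finset.mem_insert, Finset.mem_singleton] at hi
      rw [hToff i (fun h => hi.2 (Or.inl h)) (fun h => hi.2 (Or.inr h))]
    rw [hRest]
    have hA : (cT j : ℝ) * Real.log ((cT j : ℝ) / t j)
        = (cOpt j : ℝ) * Real.log ((cOpt j : ℝ) / t j) + incr (t j) (cOpt j + 1) := by
      rw [hTj]; exact step_lem (t j) (hpos j) (cOpt j)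
    have hB : (cOpt i₀ : ℝ) * Real.log ((cOpt i₀ : ℝ) / t i₀)
        = (cT i₀ : ℝ) * Real.log ((cT i₀ : ℝ) / t i₀) + incr (t i₀) (cOpt i₀) := by
      rw [hTi₀]
      have := step_lem (t i₀) (hpos i₀) (cOpt i₀ - 1)
      rw [show cOpt i₀ - 1 + 1 = cOpt i₀ by omega] at this
      exact this
    have hIncr : incr (t j) (cOpt j + 1) ≤ incr (t i₀) (cOpt i₀) := by
      rw [hcj]
      calc incr (t j) (c j + 1) ≤ incr (t i₀) (c i₀ + 1) := hj i₀
        _ ≤ incr (t i₀) ((cOpt i₀ - 1) + 1) := incr_mono (t i₀) (by omega)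
        _ = incr (t i₀) (cOpt i₀) := by rw [show cOpt i₀ - 1 + 1 = cOpt i₀ by omega]
    linarith [hA, hB, hIncr]
  refine ⟨cT, hTsum, ?_, ?_, ?_⟩
  · intro c' hc'
    exact le_trans hcost (hcOptMin c' hc')
  · omega
  · intro i
    by_cases h1 : i = j
    · subst h1; omega
    by_cases h2 : i = i₀
    · subst h2; rw [hTi₀]; omega
    · rw [hToff i h1 h2]; exact hcle i
end

section
/- Let t be a target distribution with finite support of cardinality n (so t_n is its smallest positive entry), and let M be a positive integer with n ≤ M. Then there exists an M-type distribution p with D(p‖t) < log(1 + n/(2 t_n M²)); in particular, the minimum of D(p‖t) over all M-type distributions p is strictly less than log(1 + n/(2 t_n M²)). -/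
open Finset in
lemma Sbound (nr kr θ S : ℝ) (hS0 : 0 ≤ S) (hθ0 : 0 ≤ θ) (hθ1 : θ < 1)
    (hk0 : 0 ≤ kr) (hkn : kr ≤ nr)
    (hSa : S ≤ (nr - kr) * θ) (hSb : S ≤ kr * (1 - θ)) : S ≤ nr / 4 := by
  have hnk : (0:ℝ) ≤ nr - kr := by linarith
  have h1 : S * S ≤ ((nr - kr) * θ) * (kr * (1 - θ)) := by
    apply mul_le_mul hSa hSb hS0
    positivity
  have ha : θ * (1 - θ) ≤ 1 / 4 := by nlinarith [sq_nonneg (1 - 2 * θ)]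
  have hb : (nr - kr) * kr ≤ nr ^ 2 / 4 := by nlinarith [sq_nonneg (nr - 2 * kr)]
  have hc2 : S * S ≤ nr ^ 2 / 16 := by
    nlinarith [mul_nonneg hnk hk0, mul_nonneg hθ0 (by linarith : (0:ℝ) ≤ 1 - θ)]
  nlinarith [sq_nonneg (S - nr / 4)]

open Finset in
lemma round_exists (n M : ℕ) (hn : 0 < n) (w : ℕ → ℝ)
    (hw : ∀ i ∈ range n, 0 ≤ w i) (hsum : ∑ i ∈ range n, w i = M) :
    ∃ c : ℕ → ℕ, (∀ i, n ≤ i → c i = 0) ∧ (∑ i ∈ range n, (c i : ℝ)) = M ∧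
      ∑ i ∈ range n, ((c i : ℝ) - w i) ^ 2 ≤ n / 4 := by
  classical
  set m : ℕ → ℕ := fun i => ⌊w i⌋₊ with hm
  set f : ℕ → ℝ := fun i => w i - m i with hf
  have hf0 : ∀ i ∈ range n, 0 ≤ f i := fun i hi => by
    simpa [hf, hm, sub_nonneg] using Nat.floor_le (hw i hi)
  have hf1 : ∀ i ∈ range n, f i < 1 := fun i hi => by
    have := Nat.lt_floor_add_one (w i)
    simp only [hf, hm]; linarith
  have hmle : ∑ i ∈ range n, (m i : ℝ) ≤ M := by
    rw [← hsum]
    exact Finset.sum_le_sum fun i hi => Nat.floor_le (hw i hi)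
  have hmleN : ∑ i ∈ range n, m i ≤ M := by exact_mod_cast hmle
  set k : ℕ := M - ∑ i ∈ range n, m i with hk
  have hkreal : (k : ℝ) = ∑ i ∈ range n, f i := by
    have : (k : ℝ) = (M : ℝ) - ∑ i ∈ range n, (m i : ℝ) := by
      rw [hk]; push_cast [Nat.cast_sub hmleN]; ring
    rw [this, ← hsum, ← Finset.sum_sub_distrib]
  have hkltn : (k : ℝ) < n := by
    rw [hkreal]
    calc ∑ i ∈ range n, f i < ∑ i ∈ range n, (1 : ℝ) :=
          Finset.sum_lt_sum_of_nonempty (Finset.nonempty_range_iff.mpr hn.ne') hf1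
      _ = n := by simp
  have hkn : k ≤ n := le_of_lt (by exact_mod_cast hkltn)
  -- choose A maximizing the sum of f among subsets of card k
  obtain ⟨B, hBsub, hBcard⟩ := Finset.exists_subset_card_eq (by simpa using hkn :
    k ≤ (range n).card)
  obtain ⟨A, hAmem, hAmax⟩ := Finset.exists_max_image ((range n).powersetCard k)
    (fun s => ∑ i ∈ s, f i) ⟨B, Finset.mem_powersetCard.mpr ⟨hBsub, hBcard⟩⟩
  obtain ⟨hAsub, hAcard⟩ := Finset.mem_powersetCard.mp hAmem
  -- threshold property
  have hthresh : ∀ i ∈ A, ∀ j ∈ range n \ A, f j ≤ f i := by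
    intro i hi j hj
    obtain ⟨hjn, hjA⟩ := Finset.mem_sdiff.mp hj
    have hj' : j ∉ A.erase i := fun h => hjA (Finset.mem_of_mem_erase h)
    set A' := insert j (A.erase i) with hA'
    have hA'sub : A' ⊆ range n := by
      intro x hx
      rcases Finset.mem_insert.mp hx with h | h
      · exact h ▸ hjn
      · exact hAsub (Finset.mem_of_mem_erase h)
    have hA'card : A'.card = k := by
      have hk1 : 0 < A.card := Finset.card_pos.mpr ⟨i, hi⟩
      rw [hA', Finset.card_insert_of_notMem hj', Finset.card_erase_of_mem hi, hAcard]
      rw [hAcard] at hk1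
      omega
    have hle : ∑ x ∈ A', f x ≤ ∑ x ∈ A, f x :=
      hAmax A' (Finset.mem_powersetCard.mpr ⟨hA'sub, hA'card⟩)
    rw [hA', Finset.sum_insert hj', Finset.sum_erase_eq_sub hi] at hle
    linarith
  -- the rounding
  set c : ℕ → ℕ := fun i => if i ∈ A then m i + 1 else if i ∈ range n then m i else 0
    with hc
  have hczero : ∀ i, n ≤ i → c i = 0 := by
    intro i hi
    have h1 : i ∉ range n := by simp [Nat.not_lt.mpr hi]
    have h2 : i ∉ A := fun h => h1 (hAsub h)
    simp only [hc]
    rw [if_neg h2, if_neg h1]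
  have hcsum : ∑ i ∈ range n, (c i : ℝ) = (∑ i ∈ range n, (m i : ℝ)) + k := by
    have : ∀ i ∈ range n, (c i : ℝ) = (m i : ℝ) + (if i ∈ A then 1 else 0) := by
      intro i hi
      by_cases h : i ∈ A
      · simp only [hc, if_pos h]; push_cast; ring
      · simp only [hc, if_neg h, if_pos hi]; simp
    rw [Finset.sum_congr rfl this, Finset.sum_add_distrib, Finset.sum_ite_mem,
      Finset.inter_eq_right.mpr hAsub]
    simp [hAcard]
  have hcsumM : ∑ i ∈ range n, (c i : ℝ) = M := by
    rw [hcsum, hk]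
    push_cast [Nat.cast_sub hmleN]
    ring
  clear_value k
  refine ⟨c, hczero, hcsumM, ?_⟩
  -- error analysis
  have herr : ∑ i ∈ range n, ((c i : ℝ) - w i) ^ 2
      = ∑ i ∈ range n \ A, (f i) ^ 2 + ∑ i ∈ A, (1 - f i) ^ 2 := by
    rw [← Finset.sum_sdiff hAsub]
    congr 1
    · refine Finset.sum_congr rfl fun i hi => ?_
      obtain ⟨hin, hiA⟩ := Finset.mem_sdiff.mp hi
      simp only [hc, if_neg hiA, if_pos hin, hf]
      ring
    · refine Finset.sum_congr rfl fun i hi => ?_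
      simp only [hc, if_pos hi, hf]
      push_cast
      ring
  rcases Nat.eq_zero_or_pos k with hk0 | hkpos
  · -- all fractional parts zero
    have hA0 : A = ∅ := Finset.card_eq_zero.mp (hAcard.trans hk0)
    have hfz : ∀ i ∈ range n, f i = 0 := by
      intro i hi
      have hs : ∑ i ∈ range n, f i = 0 := by rw [← hkreal, hk0]; simp
      have := (Finset.sum_eq_zero_iff_of_nonneg hf0).mp hs
      exact this i hi
    rw [herr, hA0]
    have h0 : ∑ i ∈ range n \ ∅, f i ^ 2 = 0 := by
      apply Finset.sum_eq_zero
      intro i hi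
      rw [hfz i (by simpa using (Finset.mem_sdiff.mp hi).1)]; ring
    rw [h0]
    simp
    positivity
  · -- A nonempty; threshold θ
    have hAne : A.Nonempty := Finset.card_pos.mp (hAcard ▸ hkpos)
    obtain ⟨i0, hi0A, hi0min⟩ := Finset.exists_min_image A f hAne
    set θ := f i0 with hθ
    have hθmin : ∀ i ∈ A, θ ≤ f i := hi0min
    have hθmax : ∀ j ∈ range n \ A, f j ≤ θ := fun j hj => hthresh i0 hi0A j hj
    have hθ0 : 0 ≤ θ := hf0 i0 (hAsub hi0A)
    have hθ1 : θ < 1 := hf1 i0 (hAsub hi0A)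
    clear_value θ
    set S := ∑ i ∈ range n \ A, f i with hS
    have hS0 : 0 ≤ S := Finset.sum_nonneg fun i hi =>
      hf0 i (Finset.mem_sdiff.mp hi).1
    have hS1 : ∑ i ∈ A, (1 - f i) = S := by
      have h1 : ∑ i ∈ A, (1 - f i) = (k : ℝ) - ∑ i ∈ A, f i := by
        rw [Finset.sum_sub_distrib]
        simp [hAcard]
      have h2 : S = (k : ℝ) - ∑ i ∈ A, f i := by
        have := Finset.sum_sdiff hAsub (f := f)
        rw [hS]; linarith [hkreal]
      rw [h1, ← h2]
    have hup : ∑ i ∈ A, (1 - f i) ^ 2 ≤ (1 - θ) * S := by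
      rw [← hS1, Finset.mul_sum]
      apply Finset.sum_le_sum
      intro i hi
      have h1 : 0 ≤ 1 - f i := by linarith [hf1 i (hAsub hi)]
      have h2 : 1 - f i ≤ 1 - θ := by linarith [hθmin i hi]
      nlinarith
    have hdown : ∑ i ∈ range n \ A, f i ^ 2 ≤ θ * S := by
      rw [hS, Finset.mul_sum]
      apply Finset.sum_le_sum
      intro i hi
      have h1 : 0 ≤ f i := hf0 i (Finset.mem_sdiff.mp hi).1
      have h2 : f i ≤ θ := hθmax i hi
      nlinarith
    have hSa : S ≤ ((n : ℝ) - k) * θ := by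
      have hcard : (range n \ A).card = n - k := by
        rw [Finset.card_sdiff_of_subset hAsub, hAcard, Finset.card_range]
      calc S ≤ ∑ _i ∈ range n \ A, θ := Finset.sum_le_sum fun i hi => hθmax i hi
        _ = ((range n \ A).card : ℝ) * θ := by rw [Finset.sum_const, nsmul_eq_mul]
        _ = ((n : ℝ) - k) * θ := by rw [hcard, Nat.cast_sub hkn]
    have hSb : S ≤ (k : ℝ) * (1 - θ) := by
      rw [← hS1]
      calc ∑ i ∈ A, (1 - f i) ≤ ∑ _i ∈ A, (1 - θ) := Finset.sum_le_sum fun i hi => by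
              linarith [hθmin i hi]
        _ = (k : ℝ) * (1 - θ) := by rw [Finset.sum_const, hAcard]; simp
    have hSn4 : S ≤ (n : ℝ) / 4 :=
      Sbound (n : ℝ) (k : ℝ) θ S hS0 hθ0 hθ1 (Nat.cast_nonneg k) (le_of_lt hkltn) hSa hSb
    calc ∑ i ∈ range n, ((c i : ℝ) - w i) ^ 2
        = ∑ i ∈ range n \ A, f i ^ 2 + ∑ i ∈ A, (1 - f i) ^ 2 := herr
      _ ≤ θ * S + (1 - θ) * S := add_le_add hdown hup
      _ = S := by ring
      _ ≤ (n : ℝ) / 4 := hSn4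

open Finset in
/-- if the target distribution `t` has finite support of size `n`
(so that `t (n-1)` is its smallest positive entry, 0-based) and `n ≤ M`, then some
`M`-type distribution `p` satisfies `D(p‖t) < log(1 + n/(2 t_n M²))`. -/
theorem stmt17 (t : ℕ → ℝ) (ht : IsTargetDist t) (n : ℕ) (hn : 0 < n)
    (hpos : ∀ i, i < n → 0 < t i) (hzero : ∀ i, n ≤ i → t i = 0)
    (M : ℕ) (hnM : n ≤ M) :
    ∃ p : ℕ → ℝ, IsMType M p ∧
      klE p t <
        ((Real.log (1 + (n : ℝ) / (2 * t (n - 1) * (M : ℝ) ^ 2)) : ℝ) : EReal) := by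
  classical
  obtain ⟨ht0, hmono, hhs⟩ := ht
  have hM0 : (0:ℝ) < M := by exact_mod_cast lt_of_lt_of_le hn hnM
  set tn := t (n - 1) with htn
  have htn0 : 0 < tn := hpos _ (by omega)
  have hanti : Antitone t := antitone_nat_of_succ_le hmono
  have htle : ∀ i ∈ range n, tn ≤ t i := by
    intro i hi
    have hi' : i < n := Finset.mem_range.mp hi
    exact hanti (by omega : i ≤ n - 1)
  have h_t_sum : ∑ i ∈ range n, t i = 1 := by
    have h1 : HasSum t (∑ i ∈ range n, t i) :=
      hasSum_sum_of_ne_finset_zero fun i hi => hzero i (by simpa using hi)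
    exact h1.unique hhs
  -- rounding
  obtain ⟨c, hc0, hcsum, hcerr⟩ := round_exists n M hn (fun i => (M : ℝ) * t i)
    (fun i hi => mul_nonneg hM0.le (ht0 i))
    (by rw [← Finset.mul_sum, h_t_sum, mul_one])
  set p : ℕ → ℝ := fun i => (c i : ℝ) / M with hp
  have hp0 : ∀ i, 0 ≤ p i := fun i => by positivity
  have hpzero : ∀ i, n ≤ i → p i = 0 := fun i hi => by
    simp [hp, hc0 i hi]
  have hp_sum : ∑ i ∈ range n, p i = 1 := by
    rw [hp, ← Finset.sum_div, hcsum, div_self hM0.ne']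
  have hphs : HasSum p 1 := by
    have h1 : HasSum p (∑ i ∈ range n, p i) :=
      hasSum_sum_of_ne_finset_zero fun i hi => hpzero i (by simpa using hi)
    rwa [hp_sum] at h1
  have hcle : ∀ i, c i ≤ M := by
    intro i
    by_cases hi : i < n
    · have h1 : (c i : ℝ) ≤ ∑ j ∈ range n, (c j : ℝ) :=
        Finset.single_le_sum (f := fun j => ((c j : ℕ) : ℝ)) (fun j _ => by positivity)
          (Finset.mem_range.mpr hi)
      rw [hcsum] at h1
      exact_mod_cast h1
    · rw [hc0 i (by omega)]; exact Nat.zero_le M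
  have hsupp : ∀ i, 0 < p i → i < n := by
    intro i hpi
    by_contra h
    rw [hpzero i (by omega)] at hpi
    exact lt_irrefl 0 hpi
  have hcond : ∀ i, 0 < p i → 0 < t i := fun i hpi => hpos i (hsupp i hpi)
  refine ⟨p, ⟨hphs, c, hcle, fun i => rfl⟩, ?_⟩
  unfold klE
  rw [if_pos hcond]
  rw [EReal.coe_lt_coe_iff]
  -- the tsum is a finite sum
  set g : ℕ → ℝ := fun i => if 0 < p i then p i * Real.log (p i / t i) else 0 with hg
  have hgz : ∀ i ∉ range n, g i = 0 := by
    intro i hi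
    have : ¬ 0 < p i := by
      rw [hpzero i (by simpa using hi)]; exact lt_irrefl 0
    simp [hg, this]
  have htsum : ∑' i, g i = ∑ i ∈ range n, g i := tsum_eq_sum hgz
  rw [htsum]
  set F := (range n).filter (fun i => 0 < p i) with hF
  have hsumF : ∑ i ∈ range n, g i = ∑ i ∈ F, p i * Real.log (p i / t i) := by
    rw [hF, Finset.sum_filter]
  have hwF : ∑ i ∈ F, p i = 1 := by
    rw [← hp_sum, hF]
    rw [Finset.sum_filter]
    refine Finset.sum_congr rfl fun i hi => ?_
    by_cases h : 0 < p i
    · simp [h]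
    · simp [h, le_antisymm (not_lt.mp h) (hp0 i)]
  -- Jensen
  have hjensen : ∑ i ∈ F, p i * Real.log (p i / t i) ≤
      Real.log (∑ i ∈ F, p i * (p i / t i)) := by
    have := (strictConcaveOn_log_Ioi.concaveOn).le_map_sum
      (t := F) (w := p) (p := fun i => p i / t i)
      (fun i _ => hp0 i) hwF
      (fun i hi => by
        have hpi : 0 < p i := (Finset.mem_filter.mp hi).2
        have hti : 0 < t i := hcond i hpi
        exact Set.mem_Ioi.mpr (div_pos hpi hti))
    simpa [smul_eq_mul] using this
  set X := ∑ i ∈ F, p i * (p i / t i) with hX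
  have hFne : F.Nonempty := by
    by_contra h
    rw [Finset.not_nonempty_iff_eq_empty] at h
    rw [h] at hwF
    simp at hwF
  have hX0 : 0 < X := by
    obtain ⟨j, hj⟩ := hFne
    have hpj : 0 < p j := (Finset.mem_filter.mp hj).2
    have htj : 0 < t j := hcond j hpj
    refine Finset.sum_pos' (fun i hi => ?_) ⟨j, hj, by positivity⟩
    have hpi : 0 ≤ p i := hp0 i
    have hti : 0 < t i := hcond i (Finset.mem_filter.mp hi).2
    positivity
  -- bound X
  have hXle : X ≤ 1 + (n : ℝ) / (4 * tn * (M : ℝ) ^ 2) := by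
    have h1 : X ≤ ∑ i ∈ range n, p i * (p i / t i) := by
      refine Finset.sum_le_sum_of_subset_of_nonneg (Finset.filter_subset _ _) ?_
      intro i hi _
      have := hp0 i
      have := ht0 i
      positivity
    have h2 : ∀ i ∈ range n, p i * (p i / t i)
        = t i + 2 * (p i - t i) + (p i - t i) ^ 2 / t i := by
      intro i hi
      have hti : 0 < t i := hpos i (Finset.mem_range.mp hi)
      field_simp
      ring
    have h3 : ∑ i ∈ range n, p i * (p i / t i)
        = 1 + ∑ i ∈ range n, (p i - t i) ^ 2 / t i := by
      rw [Finset.sum_congr rfl h2]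
      rw [Finset.sum_add_distrib, Finset.sum_add_distrib, h_t_sum]
      have : ∑ i ∈ range n, 2 * (p i - t i) = 0 := by
        rw [← Finset.mul_sum, Finset.sum_sub_distrib, hp_sum, h_t_sum]
        ring
      rw [this]
      ring
    have h4 : ∑ i ∈ range n, (p i - t i) ^ 2 / t i
        ≤ (∑ i ∈ range n, (p i - t i) ^ 2) / tn := by
      rw [Finset.sum_div]
      refine Finset.sum_le_sum fun i hi => ?_
      have hti : 0 < t i := hpos i (Finset.mem_range.mp hi)
      exact div_le_div_of_nonneg_left (sq_nonneg _) htn0 (htle i hi)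
    have h5 : ∑ i ∈ range n, (p i - t i) ^ 2 ≤ (n : ℝ) / 4 / (M : ℝ) ^ 2 := by
      have heq : ∀ i ∈ range n, (p i - t i) ^ 2
          = ((c i : ℝ) - (M : ℝ) * t i) ^ 2 / (M : ℝ) ^ 2 := by
        intro i hi
        rw [hp]
        field_simp
      rw [Finset.sum_congr rfl heq, ← Finset.sum_div]
      gcongr
    have h6 : (∑ i ∈ range n, (p i - t i) ^ 2) / tn ≤ (n : ℝ) / (4 * tn * (M : ℝ) ^ 2) := by
      rw [div_le_div_iff₀ htn0 (by positivity)]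
      calc (∑ i ∈ range n, (p i - t i) ^ 2) * (4 * tn * (M : ℝ) ^ 2)
          = ((∑ i ∈ range n, (p i - t i) ^ 2)) * (4 * (M : ℝ) ^ 2) * tn := by ring
        _ ≤ ((n : ℝ) / 4 / (M : ℝ) ^ 2) * (4 * (M : ℝ) ^ 2) * tn := by
            apply mul_le_mul_of_nonneg_right _ htn0.le
            apply mul_le_mul_of_nonneg_right h5 (by positivity)
        _ = (n : ℝ) * tn := by field_simp
    calc X ≤ ∑ i ∈ range n, p i * (p i / t i) := h1
      _ = 1 + ∑ i ∈ range n, (p i - t i) ^ 2 / t i := h3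
      _ ≤ 1 + (∑ i ∈ range n, (p i - t i) ^ 2) / tn := by linarith [h4]
      _ ≤ 1 + (n : ℝ) / (4 * tn * (M : ℝ) ^ 2) := by linarith [h6]
  have hYZ : 1 + (n : ℝ) / (4 * tn * (M : ℝ) ^ 2) < 1 + (n : ℝ) / (2 * tn * (M : ℝ) ^ 2) := by
    have hn0 : (0:ℝ) < n := by exact_mod_cast hn
    have h1 : (n : ℝ) / (4 * tn * (M : ℝ) ^ 2) < (n : ℝ) / (2 * tn * (M : ℝ) ^ 2) := by
      apply div_lt_div_of_pos_left hn0 (by positivity)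
      nlinarith [mul_pos htn0 (pow_pos hM0 2)]
    linarith
  calc ∑ i ∈ range n, g i = ∑ i ∈ F, p i * Real.log (p i / t i) := hsumF
    _ ≤ Real.log X := hjensen
    _ ≤ Real.log (1 + (n : ℝ) / (4 * tn * (M : ℝ) ^ 2)) := Real.log_le_log hX0 hXle
    _ < Real.log (1 + (n : ℝ) / (2 * tn * (M : ℝ) ^ 2)) :=
        Real.log_lt_log (by positivity) hYZ
end
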